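/- arXiv:1704.00708 — 6 statements merged into one kernel-verified Lean document; each statement's English description precedes it below -/
import Mathlib

section
/- Let U and Y be d×r real matrices such that U^T Y = Y^T U is positive semidefinite. Then ‖(U−Y)(U−Y)^T‖_F² ≤ 2‖UU^T − YY^T‖_F². -/
/-!
Put `D = U - Y` and `P = U + Y`. Then `2 (UUᵀ - YYᵀ) = DPᵀ + (DPᵀ)ᵀ`, hence
`4 ‖UUᵀ - YYᵀ‖² = 2 ‖DPᵀ‖² + 2 tr ((PᵀD)²)`. Because `UᵀY = YᵀU`, the matrix `PᵀD = UᵀU - YᵀY`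
is symmetric, so the last trace is a squared norm, and `PᵀP = DᵀD + 4 UᵀY`, so
`‖DPᵀ‖² = tr (DᵀD PᵀP) = ‖DDᵀ‖² + 4 tr (DᵀD UᵀY)`, where the last trace is nonnegative since
`UᵀY` is positive semidefinite.
-/

open Matrix BigOperators

noncomputable section

/-- Squared Frobenius norm of a real matrix. -/
def frobSq {m n : Type*} [Fintype m] [Fintype n] (A : Matrix m n ℝ) : ℝ :=
  ∑ i, ∑ j, (A i j) ^ 2

section Frobenius

variable {m n k : Type*} [Fintype m] [Fintype n] [Fintype k]

lemma frobSq_eq_trace_transpose_mul (A : Matrix m n ℝ) : frobSq A = trace (Aᵀ * A) := by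
  simp only [frobSq, trace, diag, mul_apply, transpose_apply, sq]
  exact Finset.sum_comm

lemma frobSq_nonneg (A : Matrix m n ℝ) : 0 ≤ frobSq A := by
  unfold frobSq
  positivity

lemma frobSq_smul (c : ℝ) (A : Matrix m n ℝ) : frobSq (c • A) = c ^ 2 * frobSq A := by
  simp only [frobSq, Matrix.smul_apply, smul_eq_mul, mul_pow, Finset.mul_sum]

lemma frobSq_mul_transpose (P : Matrix m k ℝ) (Q : Matrix n k ℝ) :
    frobSq (P * Qᵀ) = trace (Pᵀ * P * (Qᵀ * Q)) := by
  rw [frobSq_eq_trace_transpose_mul, transpose_mul, transpose_transpose, Matrix.mul_assoc,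
    trace_mul_comm]
  simp only [Matrix.mul_assoc]

lemma frobSq_add_transpose (A : Matrix n n ℝ) :
    frobSq (A + Aᵀ) = 2 * frobSq A + 2 * trace (A * A) := by
  have hAA : trace (Aᵀ * Aᵀ) = trace (A * A) := by rw [← transpose_mul, trace_transpose]
  have hAAt : trace (A * Aᵀ) = trace (Aᵀ * A) := trace_mul_comm _ _
  rw [frobSq_eq_trace_transpose_mul, frobSq_eq_trace_transpose_mul, transpose_add,
    transpose_transpose, Matrix.add_mul, Matrix.mul_add, Matrix.mul_add, trace_add, trace_add,
    trace_add, hAA, hAAt]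
  ring

end Frobenius

namespace Matrix

variable {m n : Type*} [Fintype m] [Fintype n]

lemma IsSymm.trace_mul_self_nonneg {A : Matrix n n ℝ} (hA : A.IsSymm) : 0 ≤ trace (A * A) := by
  nth_rewrite 1 [← hA.eq]
  rw [← frobSq_eq_trace_transpose_mul]
  exact frobSq_nonneg A

lemma PosSemidef.trace_transpose_mul_self_mul_nonneg {S : Matrix n n ℝ} (hS : S.PosSemidef)
    (B : Matrix m n ℝ) : 0 ≤ trace (Bᵀ * B * S) := by
  rw [Matrix.mul_assoc, trace_mul_comm, Matrix.mul_assoc, ← Matrix.mul_assoc]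
  exact (hS.mul_mul_conjTranspose_same B).trace_nonneg

end Matrix

/-- If `UᵀY = YᵀU` is positive semidefinite, then
`‖(U−Y)(U−Y)ᵀ‖_F² ≤ 2‖UUᵀ − YYᵀ‖_F²`. -/
theorem stmt0 {d r : ℕ} (U Y : Matrix (Fin d) (Fin r) ℝ)
    (hsym : Uᵀ * Y = Yᵀ * U) (hpsd : (Uᵀ * Y).PosSemidef) :
    frobSq ((U - Y) * (U - Y)ᵀ) ≤ 2 * frobSq (U * Uᵀ - Y * Yᵀ) := by
  set D := U - Y
  set P := U + Y
  have hsum : D * Pᵀ + (D * Pᵀ)ᵀ = (2 : ℝ) • (U * Uᵀ - Y * Yᵀ) := by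
    simp only [D, P, transpose_mul, transpose_add, transpose_sub, transpose_transpose,
      Matrix.sub_mul, Matrix.mul_add, two_smul]
    abel
  have hPD : Pᵀ * D = Uᵀ * U - Yᵀ * Y := by
    simp only [D, P, transpose_add, Matrix.add_mul, Matrix.mul_sub, hsym]
    abel
  have hPP : Pᵀ * P = Dᵀ * D + (4 : ℝ) • (Uᵀ * Y) := by
    simp only [D, P, transpose_add, transpose_sub, Matrix.add_mul, Matrix.sub_mul,
      Matrix.mul_add, Matrix.mul_sub, ← hsym]
    module
  have hcross : 0 ≤ trace (D * Pᵀ * (D * Pᵀ)) := by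
    have hcycle : trace (D * Pᵀ * (D * Pᵀ)) = trace (Pᵀ * D * (Pᵀ * D)) := by
      rw [Matrix.mul_assoc, trace_mul_comm]
      simp only [Matrix.mul_assoc]
    rw [hcycle]
    refine IsSymm.trace_mul_self_nonneg ?_
    rw [hPD, IsSymm, transpose_sub, transpose_mul, transpose_mul, transpose_transpose,
      transpose_transpose]
  have hDP : frobSq (D * Pᵀ) = frobSq (D * Dᵀ) + 4 * trace (Dᵀ * D * (Uᵀ * Y)) := by
    rw [frobSq_mul_transpose, frobSq_mul_transpose, hPP, Matrix.mul_add, trace_add,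
      Matrix.mul_smul, trace_smul, smul_eq_mul]
  have hnorm := frobSq_add_transpose (D * Pᵀ)
  rw [hsum, frobSq_smul] at hnorm
  linarith [hpsd.trace_transpose_mul_self_mul_nonneg D]
end
end

section
/- Let S be a d1×d2 real matrix such that each row has at most α·d2 nonzero entries and each column has at most α·d1 nonzero entries. Then the spectral norm satisfies ‖S‖ ≤ α·√(d1·d2)·‖S‖_∞. -/
/-!
Schur test: by Cauchy–Schwarz with weights `|S i j|`,
`(∑ⱼ S i j xⱼ)² ≤ (∑ⱼ |S i j|) (∑ⱼ |S i j| xⱼ²)`. Bounding the first factor by the largest row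
sum `R` and summing over `i` gives `‖S x‖² ≤ R C ‖x‖²`, with `C` the largest column sum. An
`α`-sparse matrix with entries bounded by `B` has `R ≤ α d₂ B` and `C ≤ α d₁ B`, and
`√(α d₂ B · α d₁ B) = α √(d₁ d₂) B`.
-/

open Matrix BigOperators
open scoped Classical

noncomputable section

/-- Spectral (ℓ2 operator) norm of a real matrix. -/
def specNorm {m n : Type*} [Fintype m] [Fintype n] [DecidableEq n] (A : Matrix m n ℝ) : ℝ :=
  ‖LinearMap.toContinuousLinearMap (Matrix.toEuclideanLin A)‖

theorem Finset.sum_abs_le_card_filter_ne_zero_mul {ι : Type*} (s : Finset ι) (f : ι → ℝ)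
    {B : ℝ} (hB : ∀ i ∈ s, |f i| ≤ B) :
    ∑ i ∈ s, |f i| ≤ (s.filter fun i => f i ≠ 0).card * B := by
  rw [← Finset.sum_filter_of_ne fun i _ h => abs_ne_zero.mp h, ← nsmul_eq_mul, ← Finset.sum_const]
  exact Finset.sum_le_sum fun i hi => hB i (Finset.mem_filter.mp hi).1

section Schur

variable {m n : Type*} [Fintype m] [Fintype n]

theorem Matrix.sum_sq_mulVec_le_of_abs_sum_le (A : Matrix m n ℝ) (x : n → ℝ) {R C : ℝ}
    (hR0 : 0 ≤ R) (hR : ∀ i, ∑ j, |A i j| ≤ R) (hC : ∀ j, ∑ i, |A i j| ≤ C) :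
    ∑ i, (A *ᵥ x) i ^ 2 ≤ R * C * ∑ j, x j ^ 2 := by
  have weighted_cauchy_schwarz (i : m) :
      (A *ᵥ x) i ^ 2 ≤ (∑ j, |A i j|) * ∑ j, |A i j| * x j ^ 2 :=
    Finset.sum_sq_le_sum_mul_sum_of_sq_le_mul _ (fun j _ => abs_nonneg _)
      (fun j _ => by positivity) fun j _ => by rw [← mul_assoc, ← sq, sq_abs, mul_pow]
  calc ∑ i, (A *ᵥ x) i ^ 2
      ≤ ∑ i, R * ∑ j, |A i j| * x j ^ 2 := Finset.sum_le_sum fun i _ =>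
        (weighted_cauchy_schwarz i).trans
          (mul_le_mul_of_nonneg_right (hR i) (by positivity))
    _ = R * ∑ j, (∑ i, |A i j|) * x j ^ 2 := by
        simp only [← Finset.mul_sum, Finset.sum_mul]
        rw [Finset.sum_comm]
    _ ≤ R * ∑ j, C * x j ^ 2 := by
        gcongr with j
        exact hC j
    _ = R * C * ∑ j, x j ^ 2 := by rw [← Finset.mul_sum, mul_assoc]

variable [DecidableEq n]

theorem specNorm_zero : specNorm (0 : Matrix m n ℝ) = 0 := by
  simp [specNorm]

theorem specNorm_le_sqrt_of_abs_sum_le (A : Matrix m n ℝ) {R C : ℝ}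
    (hR0 : 0 ≤ R) (hR : ∀ i, ∑ j, |A i j| ≤ R) (hC : ∀ j, ∑ i, |A i j| ≤ C) :
    specNorm A ≤ √(R * C) := by
  refine ContinuousLinearMap.opNorm_le_bound _ (Real.sqrt_nonneg _) fun x => ?_
  have hsq := A.sum_sq_mulVec_le_of_abs_sum_le x hR0 hR hC
  simp only [LinearMap.coe_toContinuousLinearMap', Matrix.ofLp_toLpLin, Matrix.toLin'_apply,
    EuclideanSpace.norm_eq, Real.norm_eq_abs, sq_abs]
  rw [← Real.sqrt_mul' _ (by positivity)]
  exact Real.sqrt_le_sqrt hsq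

end Schur

/-- If each row of `S` has at most `α·d2` nonzero entries and each column at most `α·d1`
nonzero entries, and all entries are bounded by `B` in absolute value (in particular
`B = ‖S‖_∞`), then `‖S‖ ≤ α·√(d1·d2)·B`. -/
theorem stmt3 {d1 d2 : ℕ} (S : Matrix (Fin d1) (Fin d2) ℝ) (α B : ℝ)
    (hrow : ∀ i : Fin d1, ((Finset.univ.filter fun j : Fin d2 => S i j ≠ 0).card : ℝ) ≤ α * d2)
    (hcol : ∀ j : Fin d2, ((Finset.univ.filter fun i : Fin d1 => S i j ≠ 0).card : ℝ) ≤ α * d1)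
    (hB : ∀ i j, |S i j| ≤ B) :
    specNorm S ≤ α * Real.sqrt (d1 * d2) * B := by
  rcases Nat.eq_zero_or_pos d1 with rfl | hd1
  · simp [Subsingleton.elim S 0, specNorm_zero]
  rcases Nat.eq_zero_or_pos d2 with rfl | hd2
  · simp [Subsingleton.elim S 0, specNorm_zero]
  have hB0 : 0 ≤ B := (abs_nonneg _).trans (hB ⟨0, hd1⟩ ⟨0, hd2⟩)
  have hα0 : 0 ≤ α :=
    nonneg_of_mul_nonneg_left ((Nat.cast_nonneg _).trans (hrow ⟨0, hd1⟩)) (by positivity)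
  calc specNorm S ≤ √((α * d2 * B) * (α * d1 * B)) :=
        specNorm_le_sqrt_of_abs_sum_le S (by positivity)
          (fun i => (Finset.univ.sum_abs_le_card_filter_ne_zero_mul _ fun j _ => hB i j).trans
            (mul_le_mul_of_nonneg_right (hrow i) hB0))
          (fun j => (Finset.univ.sum_abs_le_card_filter_ne_zero_mul _ fun i _ => hB i j).trans
            (mul_le_mul_of_nonneg_right (hcol j) hB0))
    _ = α * √(d1 * d2) * B := by
        rw [show (α * d2 * B) * (α * d1 * B) = (α * B) ^ 2 * (d1 * d2) by ring,
          Real.sqrt_mul (by positivity), Real.sqrt_sq (by positivity)]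
        ring
end
end

section
/- Let f(U) = (1/2)(UU^T − M*) : H : (UU^T − M*) + Q(U), where H is a symmetric bilinear form on symmetric d×d matrices, M* = U*(U*)^T, and Q is twice differentiable. Let Δ = U − U*R for an orthogonal R, and M = UU^T. Then the Hessian quadratic form satisfies: Δ : ∇²f(U) : Δ = ΔΔ^T : H : ΔΔ^T − 3(M − M*) : H : (M − M*) + 4⟨∇f(U), Δ⟩ + [Δ : ∇²Q(U) : Δ − 4⟨∇Q(U), Δ⟩]. -/
/-!
Write `f - Q` as `½ H(ψ U, ψ U)` with `ψ U = U Uᵀ - M*`. Since `ψ` is quadratic with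
`Dψ(U) Δ = U Δᵀ + Δ Uᵀ` and `D²ψ [Δ, Δ] = 2 Δ Δᵀ`, the first derivative in direction `Δ` is
`H(ψ U, Dψ Δ)` and the second is `H(Dψ Δ, Dψ Δ) + 2 H(ψ U, Δ Δᵀ)`. Orthogonality of `R` gives
`(U*R)(U*R)ᵀ = M*`, hence `Dψ Δ = ψ U + Δ Δᵀ`; substituting this, both sides of the identity
expand to `H(ψ, ψ) + 4 H(ψ, Δ Δᵀ) + H(Δ Δᵀ, Δ Δᵀ)` plus the `Q` terms.
-/

open Matrix BigOperators

noncomputable section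

attribute [local instance] Matrix.normedAddCommGroup Matrix.normedSpace

section QuadLoss

variable {𝕜 E F : Type*} [RCLike 𝕜] [NormedAddCommGroup E] [NormedSpace 𝕜 E]
  [NormedAddCommGroup F] [NormedSpace 𝕜 F]

def quadLoss (B : F →L[𝕜] F →L[𝕜] 𝕜) (S : E →L[𝕜] E →L[𝕜] F) (c : F) (x : E) : 𝕜 :=
  (1 / 2) * B (S x x - c) (S x x - c)

variable {B : F →L[𝕜] F →L[𝕜] 𝕜} (S : E →L[𝕜] E →L[𝕜] F) (c : F)

theorem hasFDerivAt_apply_self_sub (x : E) :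
    HasFDerivAt (fun y => S y y - c) ((S + S.flip) x) x := by
  refine ((S.hasFDerivAt_of_bilinear (hasFDerivAt_id x) (hasFDerivAt_id x)).sub_const c
    ).congr_fderiv ?_
  ext v
  simp

theorem hasFDerivAt_half_apply_self (hB : ∀ a b, B a b = B b a) (a : F) :
    HasFDerivAt (fun b => (1 / 2 : 𝕜) * B b b) (B a) a := by
  refine ((B.hasFDerivAt_of_bilinear (hasFDerivAt_id a) (hasFDerivAt_id a)).const_mul
    (1 / 2 : 𝕜)).congr_fderiv ?_
  ext v
  simp only [id_eq, ContinuousLinearMap.precompR_apply, ContinuousLinearMap.compL_apply,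
    ContinuousLinearMap.comp_id, _root_.add_apply, _root_.smul_apply, smul_eq_mul,
    ContinuousLinearMap.precompL_apply, ContinuousLinearMap.id_apply, hB v a]
  ring

theorem hasFDerivAt_quadLoss (hB : ∀ a b, B a b = B b a) (x : E) :
    HasFDerivAt (quadLoss B S c) ((B (S x x - c)).comp ((S + S.flip) x)) x :=
  (hasFDerivAt_half_apply_self hB _).comp x (hasFDerivAt_apply_self_sub S c x)

theorem fderiv_quadLoss (hB : ∀ a b, B a b = B b a) :
    fderiv 𝕜 (quadLoss B S c) = fun x => (B (S x x - c)).comp ((S + S.flip) x) :=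
  funext fun x => (hasFDerivAt_quadLoss S c hB x).fderiv

theorem fderiv_quadLoss_apply (hB : ∀ a b, B a b = B b a) (x v : E) :
    fderiv 𝕜 (quadLoss B S c) x v = B (S x x - c) (S x v + S v x) := by
  rw [fderiv_quadLoss S c hB]
  rfl

theorem iteratedFDeriv_two_quadLoss_apply (hB : ∀ a b, B a b = B b a) (x v : E) :
    iteratedFDeriv 𝕜 2 (quadLoss B S c) x ![v, v] =
      B (S x v + S v x) (S x v + S v x) + 2 * B (S x x - c) (S v v) := by
  have h := (B.hasFDerivAt.comp x (hasFDerivAt_apply_self_sub S c x)).clm_comp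
    (S + S.flip).hasFDerivAt
  simp only [Function.comp_def] at h
  rw [iteratedFDeriv_two_apply, fderiv_quadLoss S c hB, h.fderiv]
  simp only [map_add, _root_.add_apply, ContinuousLinearMap.comp_add, cons_val_zero,
    cons_val_one, cons_val_fin_one, ContinuousLinearMap.comp_apply,
    ContinuousLinearMap.compL_apply, ContinuousLinearMap.flip_apply]
  ring

theorem contDiff_quadLoss {n : WithTop ℕ∞} : ContDiff 𝕜 n (quadLoss B S c) := by
  unfold quadLoss
  fun_prop

end QuadLoss

def mulTransposeL {𝕜 : Type*} [RCLike 𝕜] {m n : Type*} [Fintype m] [Fintype n] :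
    Matrix m n 𝕜 →L[𝕜] Matrix m n 𝕜 →L[𝕜] Matrix m m 𝕜 :=
  (LinearMap.mk₂ 𝕜 (fun W X => W * Xᵀ) (fun _ _ _ => Matrix.add_mul ..)
    (fun _ _ _ => Matrix.smul_mul ..) (fun _ _ _ => by simp [Matrix.mul_add])
    (fun _ _ _ => by simp)).toContinuousBilinearMap

theorem mul_transpose_add_mul_transpose_eq_of_mul_transpose_eq_one {α m n : Type*} [CommRing α]
    [Fintype n] [DecidableEq n] (U V : Matrix m n α) {R : Matrix n n α} (hR : R * Rᵀ = 1) :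
    U * (U - V * R)ᵀ + (U - V * R) * Uᵀ = (U * Uᵀ - V * Vᵀ) + (U - V * R) * (U - V * R)ᵀ := by
  have hVR : V * R * (V * R)ᵀ = V * Vᵀ := by
    rw [transpose_mul, Matrix.mul_assoc, ← Matrix.mul_assoc R, hR, Matrix.one_mul]
  simp only [transpose_sub, Matrix.mul_sub, Matrix.sub_mul, hVR]
  abel

/-- The key Hessian identity (Lemma "main"): for
`f(U) = (1/2)(UUᵀ − M*) : H : (UUᵀ − M*) + Q(U)` with `H` a symmetric bilinear form,
`M* = U*(U*)ᵀ`, `Q` twice differentiable, `R` orthogonal and `Δ = U − U*R`: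
`Δ:∇²f(U):Δ = ΔΔᵀ:H:ΔΔᵀ − 3(M−M*):H:(M−M*) + 4⟨∇f(U),Δ⟩ + [Δ:∇²Q(U):Δ − 4⟨∇Q(U),Δ⟩]`. -/
theorem stmt9 {d r : ℕ}
    (Hf : Matrix (Fin d) (Fin d) ℝ →ₗ[ℝ] Matrix (Fin d) (Fin d) ℝ →ₗ[ℝ] ℝ)
    (hHsymm : ∀ X Y, Hf X Y = Hf Y X)
    (Q : Matrix (Fin d) (Fin r) ℝ → ℝ) (hQ : ContDiff ℝ 2 Q)
    (Ustar U : Matrix (Fin d) (Fin r) ℝ) (R : Matrix (Fin r) (Fin r) ℝ)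
    (hR : R ∈ Matrix.orthogonalGroup (Fin r) ℝ)
    (f : Matrix (Fin d) (Fin r) ℝ → ℝ)
    (hf : f = fun W =>
      (1 / 2) * Hf (W * Wᵀ - Ustar * Ustarᵀ) (W * Wᵀ - Ustar * Ustarᵀ) + Q W) :
    iteratedFDeriv ℝ 2 f U ![U - Ustar * R, U - Ustar * R] =
      Hf ((U - Ustar * R) * (U - Ustar * R)ᵀ) ((U - Ustar * R) * (U - Ustar * R)ᵀ) -
        3 * Hf (U * Uᵀ - Ustar * Ustarᵀ) (U * Uᵀ - Ustar * Ustarᵀ) +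
        4 * fderiv ℝ f U (U - Ustar * R) +
        (iteratedFDeriv ℝ 2 Q U ![U - Ustar * R, U - Ustar * R] -
          4 * fderiv ℝ Q U (U - Ustar * R)) := by
  set B := Hf.toContinuousBilinearMap
  set g : Matrix (Fin d) (Fin r) ℝ → ℝ := quadLoss B mulTransposeL (Ustar * Ustarᵀ)
  set Δ := U - Ustar * R
  set E := U * Uᵀ - Ustar * Ustarᵀ
  have hB : ∀ X Y, B X Y = B Y X := hHsymm
  have hRR : R * Rᵀ = 1 := by simpa using (mem_orthogonalGroup_iff (Fin r) ℝ).mp hR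
  have hkey : U * Δᵀ + Δ * Uᵀ = E + Δ * Δᵀ :=
    mul_transpose_add_mul_transpose_eq_of_mul_transpose_eq_one U Ustar hRR
  -- The `quadLoss` lemmas are applied by `exact`, not `rw`: the types of `B` and `mulTransposeL`
  -- carry the product topology on matrices, which agrees with the one coming from
  -- `Matrix.normedAddCommGroup` only up to unfolding.
  have hg1 : fderiv ℝ g U Δ = Hf E (E + Δ * Δᵀ) := by
    rw [← hkey]
    exact fderiv_quadLoss_apply _ _ hB U Δ
  have hg2 : iteratedFDeriv ℝ 2 g U ![Δ, Δ] =
      Hf (E + Δ * Δᵀ) (E + Δ * Δᵀ) + 2 * Hf E (Δ * Δᵀ) := by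
    rw [← hkey]
    exact iteratedFDeriv_two_quadLoss_apply _ _ hB U Δ
  have hgC : ContDiff ℝ 2 g := contDiff_quadLoss _ _
  have hfd : fderiv ℝ (g + Q) U = fderiv ℝ g U + fderiv ℝ Q U :=
    fderiv_add (hgC.differentiable (by norm_num) U) (hQ.differentiable (by norm_num) U)
  rw [show f = g + Q from hf, iteratedFDeriv_add_apply hgC.contDiffAt hQ.contDiffAt, hfd,
    _root_.add_apply, _root_.add_apply, hg1, hg2]
  simp only [map_add, LinearMap.add_apply]
  linear_combination hHsymm (Δ * Δᵀ) E
end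
end

section
/- Fix matrices S* and A in ℝ^{d1×d2}, and let S_γα be the set of matrices with at most γα·d2 nonzero entries per row, γα·d1 nonzero entries per column, and max-entry bounded by a fixed threshold τ ≥ ‖S*‖_∞. Suppose S* has at most α·d2 nonzero entries per row and α·d1 per column. Let S_opt = argmin_{S ∈ S_γα} ‖S − S* + A‖_F², with supports Ω (of S_opt) and Ω* (of S*). Then ‖S_opt − S*‖_F² ≤ 2‖A‖²_{Ω∪Ω*} + (8/(γ−1))·‖A‖_F², where ‖A‖²_Σ denotes the sum of squares of entries of A over index set Σ. -/
/-!
Write `X = S* - A`. On its support the minimiser is the entrywise clamp of `X` to `[-τ, τ]`;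
clamping is 1-Lipschitz and fixes `S*`, so there the error is at most `|A|`.

Off its support, an entry `(i, j)` of `Ω* \ Ω` can be switched on after switching off the
entry of least `|X|` in row `i` and in column `j` of the minimiser (when that row or column is
saturated). Optimality says that this does not pay, and since the gain of an entry is an
increasing, superadditive function of `|X|`, `|X i j| ≤ u i + v j`, where `u i` and `v j` are
these least values, or `0` for a row or column with room (`rowThreshold`).

A saturated row of the minimiser has at least `(γ - 1) · |row i of Ω* \ Ω|` entries outside
`Ω*`, at each of which `|A| = |X| ≥ u i`. Hence the sum of `u i ^ 2` over `Ω* \ Ω` is at most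
`‖A‖²/(γ - 1)`, and the same holds for the columns.
-/

open Matrix BigOperators
open scoped Classical

noncomputable section

open Finset

namespace RobustPCA

def clamp (τ x : ℝ) : ℝ := max (min x τ) (-τ)

/-- The decrease `x ^ 2 - (clamp τ x - x) ^ 2` of the residual at a target `x` when the entry
`0` is replaced by its best value `clamp τ x`, as a function of `t = |x|`. -/
def clampGain (τ t : ℝ) : ℝ := if t ≤ τ then t ^ 2 else 2 * τ * t - τ ^ 2

section Clamp

variable {τ x : ℝ}

theorem clamp_cases (hτ : 0 ≤ τ) (x : ℝ) :
    (x ≤ -τ ∧ clamp τ x = -τ) ∨ (|x| ≤ τ ∧ clamp τ x = x) ∨ (τ ≤ x ∧ clamp τ x = τ) := by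
  rcases le_total x (-τ) with h | h
  · exact Or.inl ⟨h, by rw [clamp, min_eq_left (by linarith), max_eq_right h]⟩
  rcases le_total x τ with h' | h'
  · exact Or.inr <| Or.inl ⟨abs_le.2 ⟨h, h'⟩, by rw [clamp, min_eq_left h', max_eq_left h]⟩
  · exact Or.inr <| Or.inr ⟨h', by rw [clamp, min_eq_right h', max_eq_left (by linarith)]⟩

theorem abs_clamp_le (hτ : 0 ≤ τ) (x : ℝ) : |clamp τ x| ≤ τ := by
  rcases clamp_cases hτ x with ⟨-, e⟩ | ⟨h, e⟩ | ⟨-, e⟩ <;> rw [e]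
  · rw [abs_neg, abs_of_nonneg hτ]
  · exact h
  · rw [abs_of_nonneg hτ]

theorem clamp_of_abs_le (h : |x| ≤ τ) : clamp τ x = x := by
  rw [abs_le] at h
  rw [clamp, min_eq_left h.2, max_eq_left h.1]

theorem abs_clamp_sub_clamp_le (x y : ℝ) : |clamp τ x - clamp τ y| ≤ |x - y| :=
  (abs_max_sub_max_le_abs _ _ _).trans <| by simpa using abs_min_sub_min_le_max x τ y τ

theorem sq_clamp_sub_le {s : ℝ} (hs : |s| ≤ τ) (x : ℝ) : (clamp τ x - x) ^ 2 ≤ (s - x) ^ 2 := by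
  have hτ := (abs_nonneg s).trans hs
  rw [abs_le] at hs
  rcases clamp_cases hτ x with ⟨h, e⟩ | ⟨-, e⟩ | ⟨h, e⟩ <;> rw [e] <;> nlinarith

theorem eq_clamp_of_sq_sub_le {s : ℝ} (hs : |s| ≤ τ) (h : (s - x) ^ 2 ≤ (clamp τ x - x) ^ 2) :
    s = clamp τ x := by
  have hτ := (abs_nonneg s).trans hs
  rw [abs_le] at hs
  rcases clamp_cases hτ x with ⟨hx, e⟩ | ⟨-, e⟩ | ⟨hx, e⟩ <;> rw [e] at h ⊢ <;> nlinarith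

theorem sq_sub_sq_clamp_sub (hτ : 0 ≤ τ) (x : ℝ) :
    x ^ 2 - (clamp τ x - x) ^ 2 = clampGain τ |x| := by
  rcases clamp_cases hτ x with ⟨h, e⟩ | ⟨h, e⟩ | ⟨h, e⟩ <;> rw [e, clampGain]
  · rw [abs_of_nonpos (by linarith)]
    split_ifs <;> nlinarith
  · rw [if_pos h, sq_abs]; ring
  · rw [abs_of_nonneg (by linarith)]
    split_ifs <;> nlinarith

theorem clampGain_zero (hτ : 0 ≤ τ) : clampGain τ 0 = 0 := by
  simp [clampGain, hτ]

theorem clampGain_strictMonoOn (hτ : 0 < τ) : StrictMonoOn (clampGain τ) (Set.Ici 0) := by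
  intro a ha b hb hab
  simp only [Set.mem_Ici] at ha hb
  unfold clampGain
  split_ifs <;> nlinarith

theorem clampGain_add_le {a b : ℝ} (hτ : 0 ≤ τ) (ha : 0 ≤ a) (hb : 0 ≤ b) :
    clampGain τ a + clampGain τ b ≤ clampGain τ (a + b) := by
  unfold clampGain
  split_ifs <;> nlinarith [mul_nonneg ha hb]

end Clamp

section Sparsity

variable {m n : Type*} [Fintype n]

def rowSupport (S : Matrix m n ℝ) (i : m) : Finset n := univ.filter fun j => S i j ≠ 0

def RowSparse (r : ℝ) (S : Matrix m n ℝ) : Prop := ∀ i, (#(rowSupport S i) : ℝ) ≤ r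

variable {r : ℝ} {S S' : Matrix m n ℝ}

theorem mem_rowSupport {i : m} {j : n} : j ∈ rowSupport S i ↔ S i j ≠ 0 := by
  simp [rowSupport]

theorem one_le_of_rowSparse (hS : RowSparse r S) {i : m} {j : n} (hij : S i j ≠ 0) : 1 ≤ r :=
  le_trans (by exact_mod_cast card_pos.2 ⟨j, mem_rowSupport.2 hij⟩) (hS i)

theorem RowSparse.of_rowSupport_subset (hS : RowSparse r S)
    (h : ∀ a, rowSupport S' a ⊆ rowSupport S a) : RowSparse r S' := fun a =>
  le_trans (by exact_mod_cast card_le_card (h a)) (hS a)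

theorem RowSparse.of_exchange (hS : RowSparse r S) {i : m} {j : n} {Z : m → n → Prop}
    (hsupp : ∀ a b, S' a b ≠ 0 → (a = i ∧ b = j) ∨ (¬ Z a b ∧ S a b ≠ 0))
    (hroom : (∃ b, Z i b ∧ S i b ≠ 0) ∨ (#(rowSupport S i) : ℝ) + 1 ≤ r) : RowSparse r S' := by
  intro a
  by_cases ha : a = i
  · subst ha
    have hsub : rowSupport S' a ⊆ insert j ((rowSupport S a).filter fun b => ¬ Z a b) := by
      intro b hb
      rcases hsupp a b (mem_rowSupport.1 hb) with ⟨-, rfl⟩ | ⟨hZ, hb⟩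
      · exact mem_insert_self _ _
      · exact mem_insert_of_mem (mem_filter.2 ⟨mem_rowSupport.2 hb, hZ⟩)
    have hcard := (card_le_card hsub).trans (card_insert_le _ _)
    rcases hroom with ⟨b, hZ, hb⟩ | hroom
    · have hlt : #((rowSupport S a).filter fun b => ¬ Z a b) < #(rowSupport S a) :=
        card_lt_card (filter_ssubset.2 ⟨b, mem_rowSupport.2 hb, not_not.2 hZ⟩)
      exact le_trans (by exact_mod_cast (by omega : #(rowSupport S' a) ≤ #(rowSupport S a))) (hS a)
    · refine le_trans ?_ hroom
      exact_mod_cast hcard.trans (Nat.add_le_add_right (card_filter_le _ _) 1)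
  · have hsub : rowSupport S' a ⊆ rowSupport S a := fun b hb => by
      rcases hsupp a b (mem_rowSupport.1 hb) with ⟨rfl, -⟩ | ⟨-, hb⟩
      · exact absurd rfl ha
      · exact mem_rowSupport.2 hb
    exact le_trans (by exact_mod_cast card_le_card hsub) (hS a)

end Sparsity

section SparseBounded

variable {m n : Type*} [Fintype m] [Fintype n]

/-- The constraint set `S_γα` of the paper, with `r = γα·d2`, `c = γα·d1`. -/
structure IsSparseBounded (r c τ : ℝ) (S : Matrix m n ℝ) : Prop where
  row : RowSparse r S
  col : RowSparse c Sᵀ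
  abs_le : ∀ i j, |S i j| ≤ τ

variable {r c τ : ℝ} {S S' : Matrix m n ℝ}

theorem IsSparseBounded.of_support_subset (hS : IsSparseBounded r c τ S)
    (h : ∀ a b, S' a b ≠ 0 → S a b ≠ 0) (hbound : ∀ a b, |S' a b| ≤ τ) :
    IsSparseBounded r c τ S' :=
  ⟨hS.row.of_rowSupport_subset fun a b hb => mem_rowSupport.2 (h a b (mem_rowSupport.1 hb)),
    hS.col.of_rowSupport_subset fun b a ha =>
      (mem_rowSupport (S := Sᵀ)).2 <| h a b <| (mem_rowSupport (S := S'ᵀ)).1 ha,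
    hbound⟩

theorem IsSparseBounded.of_exchange (hS : IsSparseBounded r c τ S) {i : m} {j : n}
    {Z : m → n → Prop} (hsupp : ∀ a b, S' a b ≠ 0 → (a = i ∧ b = j) ∨ (¬ Z a b ∧ S a b ≠ 0))
    (hrow : (∃ b, Z i b ∧ S i b ≠ 0) ∨ (#(rowSupport S i) : ℝ) + 1 ≤ r)
    (hcol : (∃ a, Z a j ∧ S a j ≠ 0) ∨ (#(rowSupport Sᵀ j) : ℝ) + 1 ≤ c)
    (hbound : ∀ a b, |S' a b| ≤ τ) : IsSparseBounded r c τ S' :=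
  ⟨hS.row.of_exchange hsupp hrow,
    hS.col.of_exchange (Z := fun b a => Z a b) (fun b a h => (hsupp a b h).imp And.symm id) hcol,
    hbound⟩

end SparseBounded

section Exchange

variable {m n : Type*} {i : m} {j : n} {x τ : ℝ} {Z : Finset (m × n)}

def exchangeMatrix (S : Matrix m n ℝ) (i : m) (j : n) (x : ℝ) (Z : Finset (m × n)) :
    Matrix m n ℝ :=
  fun a b => if (a, b) = (i, j) then x else if (a, b) ∈ Z then 0 else S a b

theorem exchangeMatrix_ne_zero {S : Matrix m n ℝ} {a : m} {b : n}
    (h : exchangeMatrix S i j x Z a b ≠ 0) : (a = i ∧ b = j) ∨ ((a, b) ∉ Z ∧ S a b ≠ 0) := by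
  unfold exchangeMatrix at h
  split_ifs at h with h₁ h₂
  · exact Or.inl (Prod.mk.inj h₁)
  · exact absurd rfl h
  · exact Or.inr ⟨h₂, h⟩

theorem abs_exchangeMatrix_le {S : Matrix m n ℝ} (hx : |x| ≤ τ) (hS : ∀ a b, |S a b| ≤ τ)
    (a : m) (b : n) : |exchangeMatrix S i j x Z a b| ≤ τ := by
  unfold exchangeMatrix
  split_ifs
  · exact hx
  · simpa using (abs_nonneg x).trans hx
  · exact hS a b

variable [Fintype m] [Fintype n]

theorem frobSq_eq_sum (M : Matrix m n ℝ) : frobSq M = ∑ p : m × n, M p.1 p.2 ^ 2 :=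
  (Fintype.sum_prod_type (fun p => M p.1 p.2 ^ 2)).symm

theorem frobSq_sub_frobSq {M N : Matrix m n ℝ} (P : Finset (m × n))
    (h : ∀ p ∉ P, M p.1 p.2 = N p.1 p.2) :
    frobSq M - frobSq N = ∑ p ∈ P, (M p.1 p.2 ^ 2 - N p.1 p.2 ^ 2) := by
  rw [frobSq_eq_sum, frobSq_eq_sum, ← sum_sub_distrib]
  exact (sum_subset (subset_univ P) fun p _ hp => by rw [h p hp, sub_self]).symm

theorem frobSq_exchangeMatrix_sub_sub (S X : Matrix m n ℝ) (x : ℝ) (hZ : (i, j) ∉ Z) :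
    frobSq (exchangeMatrix S i j x Z - X) - frobSq (S - X) =
      ((x - X i j) ^ 2 - (S i j - X i j) ^ 2) +
        ∑ p ∈ Z, (X p.1 p.2 ^ 2 - (S p.1 p.2 - X p.1 p.2) ^ 2) := by
  rw [frobSq_sub_frobSq (insert (i, j) Z), sum_insert hZ]
  · congr 1
    · simp [exchangeMatrix]
    · refine sum_congr rfl fun p hp => ?_
      have hp' : p ≠ (i, j) := ne_of_mem_of_not_mem hp hZ
      simp [exchangeMatrix, hp', hp]
  · intro p hp
    rw [mem_insert, not_or] at hp
    simp [exchangeMatrix, hp.1, hp.2]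

variable {r c : ℝ} {S X : Matrix m n ℝ}

theorem eq_clamp_of_isMinOn (hS : IsSparseBounded r c τ S)
    (hmin : IsMinOn (fun S' => frobSq (S' - X)) {S' | IsSparseBounded r c τ S'} S)
    (hij : S i j ≠ 0) : S i j = clamp τ (X i j) := by
  have hτ : 0 ≤ τ := (abs_nonneg _).trans (hS.abs_le i j)
  have hfeas : IsSparseBounded r c τ (exchangeMatrix S i j (clamp τ (X i j)) ∅) := by
    refine hS.of_support_subset (fun a b h => ?_)
      (abs_exchangeMatrix_le (abs_clamp_le hτ _) hS.abs_le)
    rcases exchangeMatrix_ne_zero h with ⟨rfl, rfl⟩ | ⟨-, h⟩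
    exacts [hij, h]
  have hle : frobSq (S - X) ≤ frobSq (exchangeMatrix S i j (clamp τ (X i j)) ∅ - X) :=
    isMinOn_iff.1 hmin _ hfeas
  have hdiff := frobSq_exchangeMatrix_sub_sub S X (clamp τ (X i j)) (notMem_empty (i, j))
  rw [sum_empty, add_zero] at hdiff
  exact eq_clamp_of_sq_sub_le (hS.abs_le i j) (by linarith)

theorem clampGain_le_sum_of_isMinOn (hS : IsSparseBounded r c τ S)
    (hmin : IsMinOn (fun S' => frobSq (S' - X)) {S' | IsSparseBounded r c τ S'} S)
    (hij : S i j = 0) (hZ : (i, j) ∉ Z)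
    (hfeas : IsSparseBounded r c τ (exchangeMatrix S i j (clamp τ (X i j)) Z)) :
    clampGain τ |X i j| ≤ ∑ p ∈ Z, clampGain τ |X p.1 p.2| := by
  have hτ : 0 ≤ τ := (abs_nonneg _).trans (hS.abs_le i j)
  have hle : frobSq (S - X) ≤ frobSq (exchangeMatrix S i j (clamp τ (X i j)) Z - X) :=
    isMinOn_iff.1 hmin _ hfeas
  have hdiff := frobSq_exchangeMatrix_sub_sub S X (clamp τ (X i j)) hZ
  have hloss : ∑ p ∈ Z, (X p.1 p.2 ^ 2 - (S p.1 p.2 - X p.1 p.2) ^ 2) ≤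
      ∑ p ∈ Z, clampGain τ |X p.1 p.2| := sum_le_sum fun p _ => by
    rw [← sq_sub_sq_clamp_sub hτ]
    linarith [sq_clamp_sub_le (hS.abs_le p.1 p.2) (X p.1 p.2)]
  have hgain := sq_sub_sq_clamp_sub hτ (X i j)
  rw [hij, zero_sub, neg_sq] at hdiff
  linarith

end Exchange

section Threshold

variable {κ : Type*} {r : ℝ} {R : Finset κ} {w : κ → ℝ}

def saturationThreshold (r : ℝ) (R : Finset κ) (w : κ → ℝ) : ℝ :=
  if h : r < #R + 1 ∧ R.Nonempty then R.inf' h.2 w else 0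

theorem saturationThreshold_nonneg (hw : ∀ k, 0 ≤ w k) : 0 ≤ saturationThreshold r R w := by
  unfold saturationThreshold
  split_ifs
  · exact le_inf' _ _ fun k _ => hw k
  · exact le_rfl

theorem saturationThreshold_le (hR : r < #R + 1) {k : κ} (hk : k ∈ R) :
    saturationThreshold r R w ≤ w k := by
  rw [saturationThreshold, dif_pos ⟨hR, k, hk⟩]
  exact inf'_le w hk

theorem exists_subset_sum_le_saturationThreshold (hr : 1 ≤ r) {g : ℝ → ℝ} (hg : 0 ≤ g 0) :
    ∃ Z ⊆ R, (Z.Nonempty ∨ (#R : ℝ) + 1 ≤ r) ∧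
      ∑ k ∈ Z, g (w k) ≤ g (saturationThreshold r R w) := by
  by_cases hroom : (#R : ℝ) + 1 ≤ r
  · refine ⟨∅, empty_subset _, Or.inr hroom, ?_⟩
    rwa [saturationThreshold, dif_neg fun h => h.1.not_ge hroom, sum_empty]
  · rw [not_le] at hroom
    have hne : R.Nonempty := card_pos.1 (by exact_mod_cast (by linarith : (0 : ℝ) < #R))
    obtain ⟨k, hk, hmin⟩ := exists_mem_eq_inf' hne w
    refine ⟨{k}, singleton_subset_iff.2 hk, Or.inl (singleton_nonempty k), ?_⟩
    rw [sum_singleton, saturationThreshold, dif_pos ⟨hroom, hne⟩, hmin]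

/-- A set `R` saturated for the budget `γ a` has at least `(γ - 1) · |supp s \ R|` elements
outside `supp s`, and at those `|s - y| = |y|` is at least the threshold. -/
theorem sub_one_mul_card_sdiff_mul_sq_le [Fintype κ] {γ a : ℝ} (hγ : 1 ≤ γ) {s y : κ → ℝ}
    (hs : (#(univ.filter fun k => s k ≠ 0) : ℝ) ≤ a) (R : Finset κ) :
    (γ - 1) * #((univ.filter fun k => s k ≠ 0) \ R) *
        saturationThreshold (γ * a) R (fun k => |s k - y k|) ^ 2 ≤ ∑ k, y k ^ 2 := by
  set Rs := univ.filter fun k => s k ≠ 0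
  set u := saturationThreshold (γ * a) R (fun k => |s k - y k|)
  by_cases hfull : γ * a < #R + 1
  swap
  · rw [show u = 0 from dif_neg fun h => hfull h.1]
    simpa using sum_nonneg fun k _ => sq_nonneg (y k)
  set T := R.filter fun k => s k = 0
  have hT : ∀ k ∈ T, u ^ 2 ≤ y k ^ 2 := fun k hk => by
    rw [mem_filter] at hk
    have hu := saturationThreshold_le (w := fun k => |s k - y k|) hfull hk.1
    rw [hk.2, zero_sub, abs_neg] at hu
    have hu0 : 0 ≤ u := saturationThreshold_nonneg fun _ => abs_nonneg _
    simpa only [sq_abs] using pow_le_pow_left₀ hu0 hu 2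
  have hcount : (γ - 1) * #(Rs \ R) ≤ #T := by
    have hRs : R.filter (fun k => ¬ s k = 0) = Rs ∩ R := by
      ext k; simp [Rs, and_comm]
    have e1 := card_filter_add_card_filter_not (s := R) fun k => s k = 0
    have e2 := card_inter_add_card_sdiff Rs R
    rw [hRs] at e1
    rcases Nat.eq_zero_or_pos #(Rs \ R) with h0 | hpos
    · simp [h0]
    · have h1 : (1 : ℝ) ≤ #(Rs \ R) := by exact_mod_cast hpos
      have e1' : (#T : ℝ) + #(Rs ∩ R) = #R := by exact_mod_cast e1
      have e2' : (#(Rs ∩ R) : ℝ) + #(Rs \ R) = #Rs := by exact_mod_cast e2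
      nlinarith [mul_nonneg (sub_nonneg.2 hγ) (by linarith : (0 : ℝ) ≤ a - #(Rs \ R))]
  calc (γ - 1) * #(Rs \ R) * u ^ 2 ≤ #T * u ^ 2 := by gcongr
    _ = ∑ _k ∈ T, u ^ 2 := by rw [sum_const, nsmul_eq_mul]
    _ ≤ ∑ k ∈ T, y k ^ 2 := sum_le_sum hT
    _ ≤ ∑ k, y k ^ 2 := sum_le_sum_of_subset_of_nonneg (subset_univ _) fun _ _ _ => sq_nonneg _

end Threshold

section RowThreshold

variable {m n : Type*} [Fintype n]

def rowThreshold (r : ℝ) (S X : Matrix m n ℝ) (i : m) : ℝ :=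
  saturationThreshold r (rowSupport S i) fun j => |X i j|

theorem rowThreshold_nonneg (r : ℝ) (S X : Matrix m n ℝ) (i : m) : 0 ≤ rowThreshold r S X i :=
  saturationThreshold_nonneg fun _ => abs_nonneg _

end RowThreshold

section Minimizer

variable {m n : Type*} [Fintype m] [Fintype n] {r c τ : ℝ} {S X : Matrix m n ℝ}

/-- Otherwise switching on `(i, j)` and switching off the least entries of a saturated row `i`
and column `j` would lower the objective. -/
theorem abs_le_rowThreshold_add (hS : IsSparseBounded r c τ S)
    (hmin : IsMinOn (fun S' => frobSq (S' - X)) {S' | IsSparseBounded r c τ S'} S)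
    (hτ : 0 < τ) (hr : 1 ≤ r) (hc : 1 ≤ c) {i : m} {j : n} (hij : S i j = 0) :
    |X i j| ≤ rowThreshold r S X i + rowThreshold c Sᵀ Xᵀ j := by
  have hg0 : 0 ≤ clampGain τ 0 := (clampGain_zero hτ.le).ge
  obtain ⟨Zr, hZr, hroomr, hsumr⟩ := exists_subset_sum_le_saturationThreshold
    (R := rowSupport S i) (w := fun b => |X i b|) hr hg0
  obtain ⟨Zc, hZc, hroomc, hsumc⟩ := exists_subset_sum_le_saturationThreshold
    (R := rowSupport Sᵀ j) (w := fun a => |X a j|) hc hg0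
  set Z := Zr.image (Prod.mk i) ∪ Zc.image (·, j)
  have hZ : ∀ a b, (a, b) ∈ Z → S a b ≠ 0 := by
    intro a b h
    simp only [Z, mem_union, mem_image, Prod.mk.injEq] at h
    rcases h with ⟨b', hb', rfl, rfl⟩ | ⟨a', ha', rfl, rfl⟩
    · exact mem_rowSupport.1 (hZr hb')
    · exact (mem_rowSupport (S := Sᵀ)).1 (hZc ha')
  have hfeas : IsSparseBounded r c τ (exchangeMatrix S i j (clamp τ (X i j)) Z) := by
    refine hS.of_exchange (Z := fun a b => (a, b) ∈ Z) (fun a b h => exchangeMatrix_ne_zero h)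
      ?_ ?_ (abs_exchangeMatrix_le (abs_clamp_le hτ.le _) hS.abs_le)
    · refine hroomr.imp (fun ⟨b, hb⟩ => ⟨b, ?_, mem_rowSupport.1 (hZr hb)⟩) id
      exact mem_union_left _ (mem_image_of_mem _ hb)
    · refine hroomc.imp (fun ⟨a, ha⟩ => ⟨a, ?_, (mem_rowSupport (S := Sᵀ)).1 (hZc ha)⟩) id
      exact mem_union_right _ (mem_image_of_mem (·, j) ha)
  have hexch := clampGain_le_sum_of_isMinOn hS hmin hij (fun h => hZ i j h hij) hfeas
  have hmono := clampGain_strictMonoOn hτ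
  have hsplit : ∑ p ∈ Z, clampGain τ |X p.1 p.2| ≤
      ∑ b ∈ Zr, clampGain τ |X i b| + ∑ a ∈ Zc, clampGain τ |X a j| := by
    rw [← sum_image (Prod.mk_right_injective i).injOn (f := fun p => clampGain τ |X p.1 p.2|),
      ← sum_image (Prod.mk_left_injective j).injOn (f := fun p => clampGain τ |X p.1 p.2|),
      ← sum_union_inter]
    refine le_add_of_nonneg_right (sum_nonneg fun p _ => ?_)
    exact hg0.trans <|
      hmono.monotoneOn Set.self_mem_Ici (Set.mem_Ici.2 (abs_nonneg _)) (abs_nonneg _)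
  refine (hmono.le_iff_le (Set.mem_Ici.2 (abs_nonneg _)) (Set.mem_Ici.2
    (add_nonneg (rowThreshold_nonneg _ _ _ _) (rowThreshold_nonneg _ _ _ _)))).1 ?_
  calc clampGain τ |X i j|
      ≤ clampGain τ (rowThreshold r S X i) + clampGain τ (rowThreshold c Sᵀ Xᵀ j) :=
        hexch.trans (hsplit.trans (add_le_add hsumr hsumc))
    _ ≤ _ := clampGain_add_le hτ.le (rowThreshold_nonneg _ _ _ _) (rowThreshold_nonneg _ _ _ _)

theorem sq_sub_le_of_isMinOn {γ a b : ℝ} (hγ : 1 ≤ γ) {Sstar A : Matrix m n ℝ}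
    (hSstar : IsSparseBounded a b τ Sstar) (hS : IsSparseBounded (γ * a) (γ * b) τ S)
    (hmin : IsMinOn (fun S' => frobSq (S' - (Sstar - A)))
      {S' | IsSparseBounded (γ * a) (γ * b) τ S'} S) (i : m) (j : n) :
    (S i j - Sstar i j) ^ 2 ≤ 2 * (if S i j ≠ 0 ∨ Sstar i j ≠ 0 then A i j ^ 2 else 0) +
      4 * (if Sstar i j ≠ 0 ∧ S i j = 0 then rowThreshold (γ * a) S (Sstar - A) i ^ 2 else 0) +
      4 * (if Sstar i j ≠ 0 ∧ S i j = 0 then rowThreshold (γ * b) Sᵀ (Sstar - A)ᵀ j ^ 2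
        else 0) := by
  by_cases hij : S i j ≠ 0
  · have hA : |S i j - Sstar i j| ≤ |A i j| := by
      have h := abs_clamp_sub_clamp_le (τ := τ) ((Sstar - A) i j) (Sstar i j)
      rwa [← eq_clamp_of_isMinOn hS hmin hij, clamp_of_abs_le (hSstar.abs_le i j),
        Matrix.sub_apply, sub_sub_cancel_left, abs_neg] at h
    rw [if_pos (Or.inl hij), if_neg fun h => hij h.2, if_neg fun h => hij h.2]
    nlinarith [sq_le_sq.2 hA, sq_nonneg (A i j)]
  rw [not_not] at hij
  by_cases hs : Sstar i j = 0
  · simp [hij, hs]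
  have hτ : 0 < τ := (abs_pos.2 hs).trans_le (hSstar.abs_le i j)
  have hr : 1 ≤ γ * a := by
    have ha := one_le_of_rowSparse hSstar.row hs
    nlinarith
  have hc : 1 ≤ γ * b := by
    have hb := one_le_of_rowSparse (i := j) (j := i) hSstar.col hs
    nlinarith
  have hX := abs_le_rowThreshold_add hS hmin hτ hr hc hij
  have hu := rowThreshold_nonneg (γ * a) S (Sstar - A) i
  have hv := rowThreshold_nonneg (γ * b) Sᵀ (Sstar - A)ᵀ j
  rw [if_pos (Or.inr hs), if_pos ⟨hs, hij⟩, if_pos ⟨hs, hij⟩, hij, zero_sub, neg_sq]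
  rw [Matrix.sub_apply] at hX
  nlinarith [sq_le_sq.2 (hX.trans (le_abs_self _)), sq_nonneg (Sstar i j - 2 * A i j),
    sq_nonneg (rowThreshold (γ * a) S (Sstar - A) i - rowThreshold (γ * b) Sᵀ (Sstar - A)ᵀ j)]

theorem sum_sum_ite_rowThreshold_sq_le {γ a : ℝ} (hγ : 1 < γ) {Sstar : Matrix m n ℝ}
    (hSstar : RowSparse a Sstar) (S A : Matrix m n ℝ) :
    ∑ i, ∑ j, (if Sstar i j ≠ 0 ∧ S i j = 0 then rowThreshold (γ * a) S (Sstar - A) i ^ 2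
      else 0) ≤ frobSq A / (γ - 1) := by
  rw [frobSq, sum_div]
  refine sum_le_sum fun i _ => ?_
  rw [le_div_iff₀ (sub_pos.2 hγ), ← sum_filter, sum_const, nsmul_eq_mul]
  have hfilter : (univ.filter fun j => Sstar i j ≠ 0 ∧ S i j = 0) =
      (univ.filter fun j => Sstar i j ≠ 0) \ rowSupport S i := by
    ext j; simp [rowSupport]
  have h := sub_one_mul_card_sdiff_mul_sq_le hγ.le (s := Sstar i) (y := A i) (hSstar i)
    (rowSupport S i)
  rw [hfilter]
  simp only [rowThreshold, Matrix.sub_apply]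
  linarith

theorem frobSq_transpose (A : Matrix m n ℝ) : frobSq Aᵀ = frobSq A :=
  sum_comm

theorem frobSq_sub_le_of_isMinOn [DecidableEq m] [DecidableEq n] {γ a b : ℝ} (hγ : 1 < γ)
    {Sstar A : Matrix m n ℝ}
    (hSstar : IsSparseBounded a b τ Sstar) (hS : IsSparseBounded (γ * a) (γ * b) τ S)
    (hmin : IsMinOn (fun S' => frobSq (S' - (Sstar - A)))
      {S' | IsSparseBounded (γ * a) (γ * b) τ S'} S) :
    frobSq (S - Sstar) ≤
      2 * ∑ p ∈ (univ.filter fun p : m × n => S p.1 p.2 ≠ 0) ∪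
          (univ.filter fun p : m × n => Sstar p.1 p.2 ≠ 0), A p.1 p.2 ^ 2 +
        8 / (γ - 1) * frobSq A := by
  have hrow := sum_sum_ite_rowThreshold_sq_le hγ hSstar.row S A
  have hcol : ∑ i, ∑ j, (if Sstar i j ≠ 0 ∧ S i j = 0 then
      rowThreshold (γ * b) Sᵀ (Sstar - A)ᵀ j ^ 2 else 0) ≤ frobSq A / (γ - 1) := by
    rw [sum_comm, ← frobSq_transpose A, transpose_sub]
    exact sum_sum_ite_rowThreshold_sq_le hγ hSstar.col Sᵀ Aᵀ
  rw [← filter_or, sum_filter, Fintype.sum_prod_type]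
  calc frobSq (S - Sstar) = ∑ i, ∑ j, (S i j - Sstar i j) ^ 2 := rfl
    _ ≤ _ := sum_le_sum fun i _ => sum_le_sum fun j _ =>
      sq_sub_le_of_isMinOn hγ.le hSstar hS hmin i j
    _ ≤ _ := by
      simp only [sum_add_distrib, ← mul_sum]
      linarith [show 8 / (γ - 1) * frobSq A = 4 * (frobSq A / (γ - 1)) + 4 * (frobSq A / (γ - 1))
        by ring]

end Minimizer

end RobustPCA

theorem stmt12_general {d1 d2 : ℕ} (Sstar Amat : Matrix (Fin d1) (Fin d2) ℝ)
    (γ α τ : ℝ) (hγ : 1 < γ)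
    (hτ : ∀ i j, |Sstar i j| ≤ τ)
    (hSstarRow : ∀ i : Fin d1,
      ((Finset.univ.filter fun j : Fin d2 => Sstar i j ≠ 0).card : ℝ) ≤ α * d2)
    (hSstarCol : ∀ j : Fin d2,
      ((Finset.univ.filter fun i : Fin d1 => Sstar i j ≠ 0).card : ℝ) ≤ α * d1)
    (memS : Matrix (Fin d1) (Fin d2) ℝ → Prop)
    (hmemS : ∀ S, memS S ↔
      ((∀ i : Fin d1,
          ((Finset.univ.filter fun j : Fin d2 => S i j ≠ 0).card : ℝ) ≤ γ * α * d2) ∧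
        (∀ j : Fin d2,
          ((Finset.univ.filter fun i : Fin d1 => S i j ≠ 0).card : ℝ) ≤ γ * α * d1) ∧
        (∀ i j, |S i j| ≤ τ)))
    (Sopt : Matrix (Fin d1) (Fin d2) ℝ) (hSoptMem : memS Sopt)
    (hopt : ∀ S, memS S → frobSq (Sopt - Sstar + Amat) ≤ frobSq (S - Sstar + Amat)) :
    frobSq (Sopt - Sstar) ≤
      2 * (∑ p ∈ ((Finset.univ.filter fun p : Fin d1 × Fin d2 => Sopt p.1 p.2 ≠ 0) ∪
            (Finset.univ.filter fun p : Fin d1 × Fin d2 => Sstar p.1 p.2 ≠ 0)),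
          (Amat p.1 p.2) ^ 2) +
        (8 / (γ - 1)) * frobSq Amat := by
  have hK : ∀ S, memS S ↔ RobustPCA.IsSparseBounded (γ * (α * d2)) (γ * (α * d1)) τ S := fun S => by
    rw [hmemS, ← mul_assoc, ← mul_assoc]
    exact ⟨fun ⟨hr, hc, hb⟩ => ⟨hr, hc, hb⟩, fun ⟨hr, hc, hb⟩ => ⟨hr, hc, hb⟩⟩
  have hmin : IsMinOn (fun S => frobSq (S - (Sstar - Amat)))
      {S | RobustPCA.IsSparseBounded (γ * (α * d2)) (γ * (α * d1)) τ S} Sopt :=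
    isMinOn_iff.2 fun S hS => by simpa only [sub_add] using hopt S ((hK S).2 hS)
  exact RobustPCA.frobSq_sub_le_of_isMinOn hγ ⟨hSstarRow, hSstarCol, hτ⟩ ((hK Sopt).1 hSoptMem) hmin

/-- Robust PCA sparse-estimation lemma: with `S_γα` the set of matrices with at most
`γα·d2` nonzeros per row, `γα·d1` per column and entries bounded by `τ ≥ ‖S*‖_∞`,
if `S*` is `α`-sparse and `S_opt = argmin_{S ∈ S_γα} ‖S − S* + A‖_F²`, with supports
`Ω` (of `S_opt`) and `Ω*` (of `S*`), then
`‖S_opt − S*‖_F² ≤ 2‖A‖²_{Ω∪Ω*} + (8/(γ−1))‖A‖_F²`. -/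
theorem stmt12 {d1 d2 : ℕ} (Sstar Amat : Matrix (Fin d1) (Fin d2) ℝ)
    (γ α τ : ℝ) (hγ : 1 < γ) (hα : 0 < α) (hα1 : α < 1) (hγα : γ * α ≤ 1)
    (hτ : ∀ i j, |Sstar i j| ≤ τ)
    (hSstarRow : ∀ i : Fin d1,
      ((Finset.univ.filter fun j : Fin d2 => Sstar i j ≠ 0).card : ℝ) ≤ α * d2)
    (hSstarCol : ∀ j : Fin d2,
      ((Finset.univ.filter fun i : Fin d1 => Sstar i j ≠ 0).card : ℝ) ≤ α * d1)
    (memS : Matrix (Fin d1) (Fin d2) ℝ → Prop)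
    (hmemS : ∀ S, memS S ↔
      ((∀ i : Fin d1,
          ((Finset.univ.filter fun j : Fin d2 => S i j ≠ 0).card : ℝ) ≤ γ * α * d2) ∧
        (∀ j : Fin d2,
          ((Finset.univ.filter fun i : Fin d1 => S i j ≠ 0).card : ℝ) ≤ γ * α * d1) ∧
        (∀ i j, |S i j| ≤ τ)))
    (Sopt : Matrix (Fin d1) (Fin d2) ℝ) (hSoptMem : memS Sopt)
    (hopt : ∀ S, memS S → frobSq (Sopt - Sstar + Amat) ≤ frobSq (S - Sstar + Amat)) :
    frobSq (Sopt - Sstar) ≤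
      2 * (∑ p ∈ ((Finset.univ.filter fun p : Fin d1 × Fin d2 => Sopt p.1 p.2 ≠ 0) ∪
            (Finset.univ.filter fun p : Fin d1 × Fin d2 => Sstar p.1 p.2 ≠ 0)),
          (Amat p.1 p.2) ^ 2) +
        (8 / (γ - 1)) * frobSq Amat :=
  stmt12_general Sstar Amat γ α τ hγ hτ hSstarRow hSstarCol memS hmemS Sopt hSoptMem hopt
end
end

section
/- Let S be a d1×d2 matrix with at most k nonzero entries in each row, and let x ∈ ℝ^{d1}. Suppose for every (i,j) in some set Σ ⊆ supp(S) we have |S_{ij}|² ≤ (2/k)(‖e_i^T A‖² + ‖A e_j‖²) for a matrix A ∈ ℝ^{d1×d2}, where Σ has at most k entries per row and k entries per column. Then Σ_{(i,j)∈Σ} |S_{ij}|² ≤ 4‖A‖_F². -/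
/-! Bound each term by `(2/k)(‖row‖² + ‖column‖²)`. Since every row index occurs in at most `k`
pairs of `Sig`, the row norms summed over `Sig` add up to at most `k ‖A‖_F²`; likewise for the
columns, so the total is at most `(2/k) · 2k ‖A‖_F²`. -/

open Matrix BigOperators
open scoped Classical

noncomputable section

theorem Finset.sum_comp_le_mul_sum_of_card_fiber_le {ι κ R : Type*} [Fintype κ]
    [DecidableEq κ] [Semiring R] [PartialOrder R] [IsOrderedRing R]
    (s : Finset ι) (g : ι → κ) (f : κ → R) (hf : ∀ c, 0 ≤ f c) (k : ℕ)
    (hg : ∀ c, (s.filter fun a => g a = c).card ≤ k) :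
    ∑ a ∈ s, f (g a) ≤ k * ∑ c, f c := by
  rw [← Finset.sum_fiberwise s g, Finset.mul_sum]
  refine Finset.sum_le_sum fun c _ => ?_
  calc ∑ a ∈ s with g a = c, f (g a)
      = ∑ a ∈ s with g a = c, f c := Finset.sum_congr rfl fun a ha => by
        rw [(Finset.mem_filter.1 ha).2]
    _ = (s.filter fun a => g a = c).card * f c := by rw [Finset.sum_const, nsmul_eq_mul]
    _ ≤ k * f c := by gcongr; exacts [hf c, hg c]

theorem frobSq_eq_sum_col {m n : Type*} [Fintype m] [Fintype n] (A : Matrix m n ℝ) :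
    frobSq A = ∑ j, ∑ i, (A i j) ^ 2 :=
  Finset.sum_comm

theorem stmt13_general {d1 d2 : ℕ} (S A : Matrix (Fin d1) (Fin d2) ℝ) (k : ℕ) (hk : 0 < k)
    (Sig : Finset (Fin d1 × Fin d2))
    (hSigRow : ∀ i : Fin d1, (Sig.filter fun p => p.1 = i).card ≤ k)
    (hSigCol : ∀ j : Fin d2, (Sig.filter fun p => p.2 = j).card ≤ k)
    (hbound : ∀ p ∈ Sig,
      |S p.1 p.2| ^ 2 ≤
        (2 / (k : ℝ)) * ((∑ j, (A p.1 j) ^ 2) + ∑ i, (A i p.2) ^ 2)) :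
    ∑ p ∈ Sig, |S p.1 p.2| ^ 2 ≤ 4 * frobSq A := by
  have hrows : ∑ p ∈ Sig, ∑ j, (A p.1 j) ^ 2 ≤ k * frobSq A :=
    Finset.sum_comp_le_mul_sum_of_card_fiber_le Sig Prod.fst (fun i => ∑ j, (A i j) ^ 2)
      (fun _ => by positivity) k hSigRow
  have hcols : ∑ p ∈ Sig, ∑ i, (A i p.2) ^ 2 ≤ k * frobSq A := by
    rw [frobSq_eq_sum_col]
    exact Finset.sum_comp_le_mul_sum_of_card_fiber_le Sig Prod.snd (fun j => ∑ i, (A i j) ^ 2)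
      (fun _ => by positivity) k hSigCol
  calc ∑ p ∈ Sig, |S p.1 p.2| ^ 2
      ≤ ∑ p ∈ Sig, (2 / (k : ℝ)) * ((∑ j, (A p.1 j) ^ 2) + ∑ i, (A i p.2) ^ 2) :=
        Finset.sum_le_sum hbound
    _ = (2 / (k : ℝ)) * (∑ p ∈ Sig, ∑ j, (A p.1 j) ^ 2 + ∑ p ∈ Sig, ∑ i, (A i p.2) ^ 2) := by
        rw [← Finset.mul_sum, Finset.sum_add_distrib]
    _ ≤ (2 / (k : ℝ)) * (k * frobSq A + k * frobSq A) := by gcongr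
    _ = 4 * frobSq A := by field_simp; ring

/-- Summation step in the robust PCA analysis: if `S` has at most `k` nonzero entries in
each row, `Sig ⊆ supp(S)` has at most `k` entries per row and per column, and each entry of
`S` on `Sig` satisfies `|S_{ij}|² ≤ (2/k)(‖e_iᵀA‖² + ‖Ae_j‖²)`, then
`sum over Sig of |S_{ij}|² ≤ 4‖A‖_F²`. -/
theorem stmt13 {d1 d2 : ℕ} (S A : Matrix (Fin d1) (Fin d2) ℝ) (k : ℕ) (hk : 0 < k)
    (hSrow : ∀ i : Fin d1,
      (Finset.univ.filter fun j : Fin d2 => S i j ≠ 0).card ≤ k)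
    (Sig : Finset (Fin d1 × Fin d2))
    (hsupp : ∀ p ∈ Sig, S p.1 p.2 ≠ 0)
    (hSigRow : ∀ i : Fin d1, (Sig.filter fun p => p.1 = i).card ≤ k)
    (hSigCol : ∀ j : Fin d2, (Sig.filter fun p => p.2 = j).card ≤ k)
    (hbound : ∀ p ∈ Sig,
      |S p.1 p.2| ^ 2 ≤
        (2 / (k : ℝ)) * ((∑ j, (A p.1 j) ^ 2) + ∑ i, (A i p.2) ^ 2)) :
    ∑ p ∈ Sig, |S p.1 p.2| ^ 2 ≤ 4 * frobSq A :=
  stmt13_general S A k hk Sig hSigRow hSigCol hbound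
end
end

section
/- Let A ∈ ℝ^{d1×d2}, S* ∈ ℝ^{d1×d2} with ‖S*‖_∞ ≤ τ, S ∈ ℝ^{d1×d2} with ‖S‖_∞ ≤ τ, and suppose both S and S* have at most β·d2 nonzero entries per row and β·d1 per column. Let M* ∈ ℝ^{d1×d2} be a rank-r matrix whose left singular vector matrix X* satisfies max_i ‖e_i^T X*‖² ≤ μr/d1, with largest singular value σ1 and smallest nonzero singular value σr, and τ = 2μrσ1/√(d1d2). If X D Y^T is the top-r SVD of M* + S* − S, then ‖S* − S‖ ≤ 4βμrσ1 ≤ 0.1σr implies σ_r(D) ≥ 0.9σr and ‖D‖ ≤ 1.1σ1, and consequently for every i: ‖e_i^T X‖ ≤ 1.2·√(μr/d1)·σ1·‖D‖/σ_r(D)² ≤ 2√(μr/d1)·(σ1/σr)². -/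
open Matrix BigOperators
open scoped Classical

noncomputable section

/-!
Write `A = M* + (S* − S) = X D Yᵀ + E`. Weyl's argument bounds the singular values: testing `A` on
a vector in the column space of `Y*` that is orthogonal to every column of `Y` but the `k`-th gives
`d_k ≥ σr − ‖S* − S‖`, while `Xᵀ A Y = D` gives `d_k ≤ ‖A‖ ≤ σ1 + ‖S* − S‖`. For the rows,
`A Y = X D` gives `σ_r(D) ‖e_iᵀ X‖ ≤ ‖e_iᵀ A‖ ≤ ‖e_iᵀ M*‖ + ‖e_iᵀ S*‖ + ‖e_iᵀ S‖`; incoherence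
bounds the first term by `σ1 √(μr/d1)`, and a row with at most `β d2` entries of size `τ` has norm
at most `√(β d2) τ = 2 σ1 √(βμr) √(μr/d1) ≤ 0.4 σ1 √(μr/d1)`, since `βμr ≤ 0.025`.
-/

-- Under this instance `‖A‖` is definitionally `specNorm A`.
open scoped Matrix.Norms.L2Operator
open WithLp

namespace Matrix

variable {m n ι : Type*}

lemma norm_toLp_sq_eq_dotProduct [Fintype n] (v : n → ℝ) : ‖toLp 2 v‖ ^ 2 = v ⬝ᵥ v := by
  rw [← real_inner_self_eq_norm_sq, EuclideanSpace.inner_toLp_toLp, star_trivial]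

lemma norm_toLp_eq_sqrt_sum_sq [Fintype n] (v : n → ℝ) : ‖toLp 2 v‖ = √(∑ i, v i ^ 2) := by
  simp [EuclideanSpace.norm_eq]

lemma norm_toLp_sq_le_card_mul_sq [Fintype n] (v : n → ℝ) {τ : ℝ} (hv : ∀ j, |v j| ≤ τ) :
    ‖toLp 2 v‖ ^ 2 ≤ (Finset.univ.filter fun j => v j ≠ 0).card * τ ^ 2 := by
  rw [EuclideanSpace.real_norm_sq_eq,
    ← Finset.sum_filter_of_ne fun j _ h => by simpa using h, ← nsmul_eq_mul]
  exact Finset.sum_le_card_nsmul _ _ _ fun j _ => sq_le_sq' (abs_le.1 (hv j)).1 (abs_le.1 (hv j)).2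

lemma mulVec_dotProduct_mulVec [Fintype m] [Fintype n] [Fintype ι] (X : Matrix m n ℝ)
    (E : Matrix m ι ℝ) (v : n → ℝ) (w : ι → ℝ) :
    (X *ᵥ v) ⬝ᵥ (E *ᵥ w) = v ⬝ᵥ ((Xᵀ * E) *ᵥ w) := by
  rw [← mulVec_mulVec, dotProduct_mulVec v, vecMul_transpose]

lemma diagonal_mulVec_eq_smul_of_eq_zero [Fintype ι] [DecidableEq ι] (d w : ι → ℝ) {k : ι}
    (hw : ∀ j, j ≠ k → w j = 0) : diagonal d *ᵥ w = d k • w := by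
  ext j
  by_cases hj : j = k
  · subst hj; simp [mulVec_diagonal]
  · simp [mulVec_diagonal, hw j hj]

lemma mul_norm_le_norm_diagonal_mulVec [Fintype ι] [DecidableEq ι] {d : ι → ℝ} {c : ℝ}
    (hc : 0 ≤ c) (hd : ∀ k, c ≤ |d k|) (w : ι → ℝ) :
    c * ‖toLp 2 w‖ ≤ ‖toLp 2 (diagonal d *ᵥ w)‖ := by
  rw [← pow_le_pow_iff_left₀ (by positivity) (norm_nonneg _) two_ne_zero, mul_pow,
    EuclideanSpace.real_norm_sq_eq, EuclideanSpace.real_norm_sq_eq, Finset.mul_sum]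
  refine Finset.sum_le_sum fun k _ => ?_
  simp only [mulVec_diagonal, mul_pow]
  exact mul_le_mul_of_nonneg_right ((pow_le_pow_left₀ hc (hd k) 2).trans_eq (sq_abs _))
    (sq_nonneg _)

lemma exists_ne_zero_mulVec_eq_zero_of_ne [Fintype ι] [DecidableEq ι] (G : Matrix ι ι ℝ)
    (k : ι) : ∃ w ≠ 0, ∀ j, j ≠ k → (G *ᵥ w) j = 0 := by
  let f := LinearMap.funLeft ℝ ℝ (Subtype.val : {j // j ≠ k} → ι) ∘ₗ G.mulVecLin
  have hrank : Module.finrank ℝ ({j // j ≠ k} → ℝ) < Module.finrank ℝ (ι → ℝ) := by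
    simp only [Module.finrank_fintype_fun_eq_card, Fintype.card_subtype_compl,
      Fintype.card_unique]
    have : 0 < Fintype.card ι := Fintype.card_pos_iff.2 ⟨k⟩
    omega
  obtain ⟨w, hw, hw0⟩ :=
    Submodule.exists_mem_ne_zero_of_ne_bot (LinearMap.ker_ne_bot_of_finrank_lt hrank)
  have hfw : f w = 0 := LinearMap.mem_ker.1 hw
  exact ⟨w, hw0, fun j hj => congrFun hfw ⟨j, hj⟩⟩

section Isometry

variable [Fintype m] [Fintype ι] [DecidableEq ι] {X : Matrix m ι ℝ}

lemma norm_toLp_mulVec_of_transpose_mul_self_eq_one (hX : Xᵀ * X = 1) (w : ι → ℝ) :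
    ‖toLp 2 (X *ᵥ w)‖ = ‖toLp 2 w‖ := by
  rw [← sq_eq_sq₀ (norm_nonneg _) (norm_nonneg _), norm_toLp_sq_eq_dotProduct,
    norm_toLp_sq_eq_dotProduct, mulVec_dotProduct_mulVec, hX, one_mulVec]

lemma l2_opNorm_le_one_of_transpose_mul_self_eq_one (hX : Xᵀ * X = 1) : ‖X‖ ≤ 1 :=
  ContinuousLinearMap.opNorm_le_bound _ zero_le_one fun x => by
    rw [one_mul]
    exact (norm_toLp_mulVec_of_transpose_mul_self_eq_one hX (ofLp x)).le

lemma norm_sub_mulVec_transpose_mulVec_sq (hX : Xᵀ * X = 1) (v : m → ℝ) :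
    ‖toLp 2 (v - X *ᵥ (Xᵀ *ᵥ v))‖ ^ 2 = ‖toLp 2 v‖ ^ 2 - ‖toLp 2 (Xᵀ *ᵥ v)‖ ^ 2 := by
  have hcross : v ⬝ᵥ (X *ᵥ (Xᵀ *ᵥ v)) = (Xᵀ *ᵥ v) ⬝ᵥ (Xᵀ *ᵥ v) := by
    rw [dotProduct_mulVec, ← mulVec_transpose]
  have hproj : (X *ᵥ (Xᵀ *ᵥ v)) ⬝ᵥ (X *ᵥ (Xᵀ *ᵥ v)) = (Xᵀ *ᵥ v) ⬝ᵥ (Xᵀ *ᵥ v) := by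
    rw [mulVec_dotProduct_mulVec, hX, one_mulVec]
  simp only [norm_toLp_sq_eq_dotProduct, sub_dotProduct, dotProduct_sub, dotProduct_comm _ v,
    hcross, hproj]
  ring

end Isometry

lemma norm_toLp_mulVec_le [Fintype m] [Fintype n] [DecidableEq n] (A : Matrix m n ℝ)
    (v : n → ℝ) : ‖toLp 2 (A *ᵥ v)‖ ≤ ‖A‖ * ‖toLp 2 v‖ :=
  l2_opNorm_mulVec A (toLp 2 v)

section OperatorNorm

variable [Fintype m] [Fintype n] [DecidableEq m] [DecidableEq n]

lemma l2_opNorm_transpose (C : Matrix m n ℝ) : ‖Cᵀ‖ = ‖C‖ := by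
  simpa using l2_opNorm_conjTranspose C

lemma norm_toLp_vecMul_le (v : m → ℝ) (C : Matrix m n ℝ) :
    ‖toLp 2 (v ᵥ* C)‖ ≤ ‖C‖ * ‖toLp 2 v‖ := by
  rw [← mulVec_transpose, ← l2_opNorm_transpose]
  exact norm_toLp_mulVec_le Cᵀ v

end OperatorNorm

lemma l2_opNorm_diagonal_le [Fintype ι] [DecidableEq ι] {d : ι → ℝ} {σ : ℝ} (hσ : 0 ≤ σ)
    (hd : ∀ k, |d k| ≤ σ) : ‖diagonal d‖ ≤ σ := by
  rw [l2_opNorm_diagonal]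
  exact (pi_norm_le_iff_of_nonneg hσ).2 hd

lemma l2_opNorm_diagonal_mul_transpose_le [Fintype n] [Fintype ι] [DecidableEq n]
    [DecidableEq ι] {Y : Matrix n ι ℝ} (hY : Yᵀ * Y = 1) {d : ι → ℝ} {σ : ℝ} (hσ : 0 ≤ σ)
    (hd : ∀ k, |d k| ≤ σ) : ‖diagonal d * Yᵀ‖ ≤ σ :=
  calc ‖diagonal d * Yᵀ‖ ≤ ‖diagonal d‖ * ‖Yᵀ‖ := l2_opNorm_mul _ _
    _ ≤ σ * 1 := by
      rw [l2_opNorm_transpose]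
      exact mul_le_mul (l2_opNorm_diagonal_le hσ hd)
        (l2_opNorm_le_one_of_transpose_mul_self_eq_one hY) (norm_nonneg _) hσ
    _ = σ := mul_one σ

section SVD

variable [Fintype n] [Fintype ι] [DecidableEq ι]
  {X : Matrix m ι ℝ} {Y : Matrix n ι ℝ} {E : Matrix m n ℝ} {d : ι → ℝ}

lemma svd_mul_eq (hY : Yᵀ * Y = 1) (hEY : E * Y = 0) :
    (X * diagonal d * Yᵀ + E) * Y = X * diagonal d := by
  rw [Matrix.add_mul, Matrix.mul_assoc _ Yᵀ, hY, Matrix.mul_one, hEY, add_zero]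

variable [DecidableEq n]

lemma norm_toLp_row_svd_le (hY : Yᵀ * Y = 1) {σ : ℝ} (hσ : 0 ≤ σ) (hd : ∀ k, |d k| ≤ σ)
    (i : m) : ‖toLp 2 ((X * diagonal d * Yᵀ) i)‖ ≤ σ * ‖toLp 2 (X i)‖ := by
  rw [Matrix.mul_assoc]
  exact (norm_toLp_vecMul_le _ _).trans
    (mul_le_mul_of_nonneg_right (l2_opNorm_diagonal_mul_transpose_le hY hσ hd) (norm_nonneg _))

lemma mul_norm_toLp_row_le (hY : Yᵀ * Y = 1) {A : Matrix m n ℝ} (hAY : A * Y = X * diagonal d)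
    {c : ℝ} (hc : 0 ≤ c) (hd : ∀ k, c ≤ |d k|) (i : m) :
    c * ‖toLp 2 (X i)‖ ≤ ‖toLp 2 (A i)‖ :=
  calc c * ‖toLp 2 (X i)‖ ≤ ‖toLp 2 (diagonal d *ᵥ X i)‖ :=
        mul_norm_le_norm_diagonal_mulVec hc hd _
    _ = ‖toLp 2 (A i ᵥ* Y)‖ := by
      congr 2
      ext k
      rw [mulVec_diagonal, mul_comm, ← mul_diagonal, ← hAY]
      rfl
    _ ≤ ‖Y‖ * ‖toLp 2 (A i)‖ := norm_toLp_vecMul_le _ _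
    _ ≤ 1 * ‖toLp 2 (A i)‖ := by
      gcongr; exact l2_opNorm_le_one_of_transpose_mul_self_eq_one hY
    _ = ‖toLp 2 (A i)‖ := one_mul _

variable [Fintype m]

lemma l2_opNorm_svd_le (hX : Xᵀ * X = 1) (hY : Yᵀ * Y = 1) {σ : ℝ} (hσ : 0 ≤ σ)
    (hd : ∀ k, |d k| ≤ σ) : ‖X * diagonal d * Yᵀ‖ ≤ σ :=
  calc ‖X * diagonal d * Yᵀ‖ ≤ ‖X‖ * ‖diagonal d * Yᵀ‖ := by
        rw [Matrix.mul_assoc]; exact l2_opNorm_mul _ _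
    _ ≤ 1 * σ := mul_le_mul (l2_opNorm_le_one_of_transpose_mul_self_eq_one hX)
        (l2_opNorm_diagonal_mul_transpose_le hY hσ hd) (norm_nonneg _) zero_le_one
    _ = σ := one_mul σ

lemma norm_svd_mulVec_sq_le (hX : Xᵀ * X = 1) (hY : Yᵀ * Y = 1) (hXE : Xᵀ * E = 0)
    (hEY : E * Y = 0) (v : n → ℝ) :
    ‖toLp 2 ((X * diagonal d * Yᵀ + E) *ᵥ v)‖ ^ 2 ≤
      ‖toLp 2 (diagonal d *ᵥ (Yᵀ *ᵥ v))‖ ^ 2 +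
        ‖E‖ ^ 2 * (‖toLp 2 v‖ ^ 2 - ‖toLp 2 (Yᵀ *ᵥ v)‖ ^ 2) := by
  set a := diagonal d *ᵥ (Yᵀ *ᵥ v)
  set u := v - Y *ᵥ (Yᵀ *ᵥ v)
  -- `E` kills the component of `v` in the column space of `Y`
  have hsplit : (X * diagonal d * Yᵀ + E) *ᵥ v = X *ᵥ a + E *ᵥ u := by
    simp only [a, u, add_mulVec, mulVec_sub, mulVec_mulVec, ← Matrix.mul_assoc, hEY,
      Matrix.zero_mul, zero_mulVec, sub_zero]
  have horth : (X *ᵥ a) ⬝ᵥ (E *ᵥ u) = 0 := by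
    rw [mulVec_dotProduct_mulVec, hXE, zero_mulVec, dotProduct_zero]
  have hEu : ‖toLp 2 (E *ᵥ u)‖ ^ 2 ≤ ‖E‖ ^ 2 * ‖toLp 2 u‖ ^ 2 := by
    rw [← mul_pow]
    exact pow_le_pow_left₀ (norm_nonneg _) (norm_toLp_mulVec_le E u) 2
  rw [hsplit, ← norm_sub_mulVec_transpose_mulVec_sq hY,
    ← norm_toLp_mulVec_of_transpose_mul_self_eq_one hX a]
  calc ‖toLp 2 (X *ᵥ a + E *ᵥ u)‖ ^ 2 = ‖toLp 2 (X *ᵥ a)‖ ^ 2 + ‖toLp 2 (E *ᵥ u)‖ ^ 2 := by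
        simp only [norm_toLp_sq_eq_dotProduct, add_dotProduct, dotProduct_add,
          dotProduct_comm (E *ᵥ u), horth]
        ring
    _ ≤ _ := by gcongr

lemma norm_svd_mulVec_le_of_eq_zero (hX : Xᵀ * X = 1) (hY : Yᵀ * Y = 1) (hXE : Xᵀ * E = 0)
    (hEY : E * Y = 0) {k : ι} (hdk : 0 ≤ d k) (hE : ‖E‖ ≤ d k) {v : n → ℝ}
    (hv : ∀ j, j ≠ k → (Yᵀ *ᵥ v) j = 0) :
    ‖toLp 2 ((X * diagonal d * Yᵀ + E) *ᵥ v)‖ ≤ d k * ‖toLp 2 v‖ := by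
  have hsq := norm_svd_mulVec_sq_le (d := d) hX hY hXE hEY v
  rw [diagonal_mulVec_eq_smul_of_eq_zero d _ hv, toLp_smul, norm_smul, Real.norm_eq_abs,
    abs_of_nonneg hdk] at hsq
  have hproj : ‖toLp 2 (Yᵀ *ᵥ v)‖ ^ 2 ≤ ‖toLp 2 v‖ ^ 2 := by
    have := norm_sub_mulVec_transpose_mulVec_sq hY v
    nlinarith [sq_nonneg ‖toLp 2 (v - Y *ᵥ (Yᵀ *ᵥ v))‖]
  have hE2 : ‖E‖ ^ 2 ≤ d k ^ 2 := pow_le_pow_left₀ (norm_nonneg _) hE 2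
  refine (pow_le_pow_iff_left₀ (norm_nonneg _) (by positivity) two_ne_zero).1 ?_
  nlinarith [mul_le_mul_of_nonneg_right hE2 (sub_nonneg.2 hproj)]

lemma sub_l2_opNorm_sub_le_of_svd (hX : Xᵀ * X = 1) (hY : Yᵀ * Y = 1) (hXE : Xᵀ * E = 0)
    (hEY : E * Y = 0) {Xs : Matrix m ι ℝ} {Ys : Matrix n ι ℝ} {ds : ι → ℝ}
    (hXs : Xsᵀ * Xs = 1) (hYs : Ysᵀ * Ys = 1) {σ : ℝ} (hσ : 0 ≤ σ) (hds : ∀ j, σ ≤ |ds j|)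
    {k : ι} (hdk : 0 ≤ d k) (hE : ‖E‖ ≤ d k) :
    σ - ‖X * diagonal d * Yᵀ + E - Xs * diagonal ds * Ysᵀ‖ ≤ d k := by
  set A := X * diagonal d * Yᵀ + E
  set M := Xs * diagonal ds * Ysᵀ
  -- a test vector in the column space of `Ys` orthogonal to all columns of `Y` but the `k`-th
  obtain ⟨w, hw0, hw⟩ := exists_ne_zero_mulVec_eq_zero_of_ne (Yᵀ * Ys) k
  have hv : ‖toLp 2 (Ys *ᵥ w)‖ = ‖toLp 2 w‖ :=
    norm_toLp_mulVec_of_transpose_mul_self_eq_one hYs w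
  have hw_pos : 0 < ‖toLp 2 w‖ := norm_pos_iff.2 (by simpa using hw0)
  have hMv : M *ᵥ (Ys *ᵥ w) = Xs *ᵥ (diagonal ds *ᵥ w) := by
    simp only [M, mulVec_mulVec, Matrix.mul_assoc, hYs, Matrix.mul_one]
  have hlow : σ * ‖toLp 2 w‖ ≤ ‖toLp 2 (M *ᵥ (Ys *ᵥ w))‖ := by
    rw [hMv, norm_toLp_mulVec_of_transpose_mul_self_eq_one hXs]
    exact mul_norm_le_norm_diagonal_mulVec hσ hds w
  have hup : ‖toLp 2 (A *ᵥ (Ys *ᵥ w))‖ ≤ d k * ‖toLp 2 w‖ := by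
    rw [← hv]
    exact norm_svd_mulVec_le_of_eq_zero hX hY hXE hEY hdk hE fun j hj => by
      rw [mulVec_mulVec]; exact hw j hj
  have htri :
      ‖toLp 2 (M *ᵥ (Ys *ᵥ w))‖ ≤ ‖toLp 2 (A *ᵥ (Ys *ᵥ w))‖ + ‖A - M‖ * ‖toLp 2 w‖ := by
    rw [← hv]
    calc ‖toLp 2 (M *ᵥ (Ys *ᵥ w))‖
        = ‖toLp 2 (A *ᵥ (Ys *ᵥ w)) - toLp 2 ((A - M) *ᵥ (Ys *ᵥ w))‖ := by
          rw [← toLp_sub, sub_mulVec, sub_sub_cancel]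
      _ ≤ ‖toLp 2 (A *ᵥ (Ys *ᵥ w))‖ + ‖toLp 2 ((A - M) *ᵥ (Ys *ᵥ w))‖ := norm_sub_le _ _
      _ ≤ ‖toLp 2 (A *ᵥ (Ys *ᵥ w))‖ + ‖A - M‖ * ‖toLp 2 (Ys *ᵥ w)‖ := by
          gcongr; exact norm_toLp_mulVec_le _ _
  refine le_of_mul_le_mul_right ?_ hw_pos
  linarith

variable [DecidableEq m]

lemma le_l2_opNorm_svd (hX : Xᵀ * X = 1) (hY : Yᵀ * Y = 1) (hEY : E * Y = 0) (k : ι) :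
    d k ≤ ‖X * diagonal d * Yᵀ + E‖ :=
  calc d k ≤ ‖d‖ := (le_abs_self _).trans (norm_le_pi_norm d k)
    _ = ‖Xᵀ * ((X * diagonal d * Yᵀ + E) * Y)‖ := by
      rw [svd_mul_eq hY hEY, ← Matrix.mul_assoc, hX, Matrix.one_mul, l2_opNorm_diagonal]
    _ ≤ ‖Xᵀ‖ * (‖X * diagonal d * Yᵀ + E‖ * ‖Y‖) :=
      (l2_opNorm_mul _ _).trans (mul_le_mul_of_nonneg_left (l2_opNorm_mul _ _) (norm_nonneg _))
    _ ≤ 1 * (‖X * diagonal d * Yᵀ + E‖ * 1) := by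
      rw [l2_opNorm_transpose]
      gcongr
      · exact l2_opNorm_le_one_of_transpose_mul_self_eq_one hX
      · exact l2_opNorm_le_one_of_transpose_mul_self_eq_one hY
    _ = ‖X * diagonal d * Yᵀ + E‖ := by ring

lemma le_add_l2_opNorm_sub_of_svd (hX : Xᵀ * X = 1) (hY : Yᵀ * Y = 1) (hEY : E * Y = 0)
    {Xs : Matrix m ι ℝ} {Ys : Matrix n ι ℝ} {ds : ι → ℝ} (hXs : Xsᵀ * Xs = 1)
    (hYs : Ysᵀ * Ys = 1) {σ : ℝ} (hσ : 0 ≤ σ) (hds : ∀ j, |ds j| ≤ σ) (k : ι) :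
    d k ≤ σ + ‖X * diagonal d * Yᵀ + E - Xs * diagonal ds * Ysᵀ‖ :=
  calc d k ≤ ‖X * diagonal d * Yᵀ + E‖ := le_l2_opNorm_svd hX hY hEY k
    _ ≤ ‖Xs * diagonal ds * Ysᵀ‖ + ‖X * diagonal d * Yᵀ + E - Xs * diagonal ds * Ysᵀ‖ :=
      norm_le_insert' _ _
    _ ≤ σ + ‖X * diagonal d * Yᵀ + E - Xs * diagonal ds * Ysᵀ‖ := by
      gcongr; exact l2_opNorm_svd_le hXs hYs hσ hds

end SVD

end Matrix

lemma norm_toLp_le_of_sparse {d1 d2 : ℕ} (hd2 : 0 < d2) {β μ r σ1 : ℝ} (hμr : 0 ≤ μ * r)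
    (hσ1 : 0 ≤ σ1) (hβμr : β * μ * r ≤ 0.025) {v : Fin d2 → ℝ}
    (hv : ∀ j, |v j| ≤ 2 * μ * r * σ1 / √(d1 * d2))
    (hcard : ((Finset.univ.filter fun j => v j ≠ 0).card : ℝ) ≤ β * d2) :
    ‖toLp 2 v‖ ≤ 0.4 * σ1 * √(μ * r / d1) := by
  have hd2' : (0 : ℝ) < d2 := by exact_mod_cast hd2
  have hμr_d1 : 0 ≤ μ * r / d1 := by positivity
  have hτ : (2 * μ * r * σ1 / √(d1 * d2)) ^ 2 * d2 = 4 * σ1 ^ 2 * (μ * r) * (μ * r / d1) := by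
    rw [div_pow, Real.sq_sqrt (by positivity)]
    field_simp
    ring
  refine (pow_le_pow_iff_left₀ (norm_nonneg _) (by positivity) two_ne_zero).1 ?_
  calc ‖toLp 2 v‖ ^ 2
        ≤ (Finset.univ.filter fun j => v j ≠ 0).card * (2 * μ * r * σ1 / √(d1 * d2)) ^ 2 :=
        Matrix.norm_toLp_sq_le_card_mul_sq v hv
    _ ≤ β * d2 * (2 * μ * r * σ1 / √(d1 * d2)) ^ 2 := by gcongr
    _ = 4 * σ1 ^ 2 * (β * μ * r) * (μ * r / d1) := by linear_combination β * hτ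
    _ ≤ 4 * σ1 ^ 2 * 0.025 * (μ * r / d1) := by gcongr
    _ ≤ (0.4 * σ1 * √(μ * r / d1)) ^ 2 := by
      rw [mul_pow, Real.sq_sqrt hμr_d1]
      nlinarith [mul_nonneg (sq_nonneg σ1) hμr_d1]

lemma norm_toLp_add_sub_le_of_sparse {d1 d2 : ℕ} (hd2 : 0 < d2) {β μ r σ1 : ℝ}
    (hμr : 0 ≤ μ * r) (hσ1 : 0 ≤ σ1) (hβμr : β * μ * r ≤ 0.025) {u v w : Fin d2 → ℝ}
    (hu : ‖toLp 2 u‖ ≤ σ1 * √(μ * r / d1))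
    (hv : ∀ j, |v j| ≤ 2 * μ * r * σ1 / √(d1 * d2))
    (hw : ∀ j, |w j| ≤ 2 * μ * r * σ1 / √(d1 * d2))
    (hv_card : ((Finset.univ.filter fun j => v j ≠ 0).card : ℝ) ≤ β * d2)
    (hw_card : ((Finset.univ.filter fun j => w j ≠ 0).card : ℝ) ≤ β * d2) :
    ‖toLp 2 (u + (v - w))‖ ≤ 1.8 * σ1 * √(μ * r / d1) := by
  rw [toLp_add, toLp_sub]
  linarith [norm_add_le (toLp 2 u) (toLp 2 v - toLp 2 w), norm_sub_le (toLp 2 v) (toLp 2 w),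
    norm_toLp_le_of_sparse hd2 hμr hσ1 hβμr hv hv_card,
    norm_toLp_le_of_sparse hd2 hμr hσ1 hβμr hw hw_card]

theorem stmt15_general {d1 d2 r : ℕ} (hd2 : 0 < d2)
    (β μ σ1 σr : ℝ) (hμ : 0 < μ) (hσr : 0 < σr) (hσ1 : σr ≤ σ1)
    -- rank-r SVD of M*, with incoherent left singular vectors
    (Xs : Matrix (Fin d1) (Fin r) ℝ) (Ys : Matrix (Fin d2) (Fin r) ℝ) (ds : Fin r → ℝ)
    (hXs : Xsᵀ * Xs = 1) (hYs : Ysᵀ * Ys = 1)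
    (hds : ∀ k, σr ≤ ds k ∧ ds k ≤ σ1)
    (hinc : ∀ i : Fin d1, (∑ k, (Xs i k) ^ 2) ≤ μ * r / d1)
    -- sparse bounded perturbations S, S*
    (S Sstar : Matrix (Fin d1) (Fin d2) ℝ)
    (hSτ : ∀ i j, |S i j| ≤ 2 * μ * r * σ1 / Real.sqrt (d1 * d2))
    (hSstarτ : ∀ i j, |Sstar i j| ≤ 2 * μ * r * σ1 / Real.sqrt (d1 * d2))
    (hSrow : ∀ i : Fin d1,
      ((Finset.univ.filter fun j : Fin d2 => S i j ≠ 0).card : ℝ) ≤ β * d2)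
    (hSstarRow : ∀ i : Fin d1,
      ((Finset.univ.filter fun j : Fin d2 => Sstar i j ≠ 0).card : ℝ) ≤ β * d2)
    -- top-r SVD of M* + S* − S
    (X : Matrix (Fin d1) (Fin r) ℝ) (Y : Matrix (Fin d2) (Fin r) ℝ) (dd : Fin r → ℝ)
    (E : Matrix (Fin d1) (Fin d2) ℝ)
    (hX : Xᵀ * X = 1) (hY : Yᵀ * Y = 1) (hdd : ∀ k, 0 ≤ dd k)
    (hdecomp : Xs * Matrix.diagonal ds * Ysᵀ + Sstar - S = X * Matrix.diagonal dd * Yᵀ + E)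
    (hXE : Xᵀ * E = 0) (hEY : E * Y = 0)
    (hEtail : ∀ k, specNorm E ≤ dd k)
    -- the antecedent of the implication
    (hSdiff : specNorm (Sstar - S) ≤ 4 * β * μ * r * σ1)
    (hsmall : 4 * β * μ * r * σ1 ≤ 0.1 * σr) :
    (∀ k, 0.9 * σr ≤ dd k ∧ dd k ≤ 1.1 * σ1) ∧
      (∀ i : Fin d1,
        Real.sqrt (∑ k, (X i k) ^ 2) ≤
          2 * Real.sqrt (μ * r / d1) * (σ1 / σr) ^ 2) := by
  have hσ1pos : 0 < σ1 := hσr.trans_le hσ1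
  have hds_lower : ∀ k, σr ≤ |ds k| := fun k => (hds k).1.trans (le_abs_self _)
  have hds_upper : ∀ k, |ds k| ≤ σ1 := fun k => by
    rw [abs_of_nonneg (hσr.le.trans (hds k).1)]; exact (hds k).2
  have hA : X * diagonal dd * Yᵀ + E = Xs * diagonal ds * Ysᵀ + (Sstar - S) := by
    rw [← hdecomp, add_sub_assoc]
  have hdiff : ‖X * diagonal dd * Yᵀ + E - Xs * diagonal ds * Ysᵀ‖ ≤ 0.1 * σr := by
    rw [hA, add_sub_cancel_left]; exact hSdiff.trans hsmall
  have hdd_bounds : ∀ k, 0.9 * σr ≤ dd k ∧ dd k ≤ 1.1 * σ1 := fun k => by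
    have hlow :=
      sub_l2_opNorm_sub_le_of_svd hX hY hXE hEY hXs hYs hσr.le hds_lower (hdd k) (hEtail k)
    have hup := le_add_l2_opNorm_sub_of_svd (d := dd) hX hY hEY hXs hYs hσ1pos.le hds_upper k
    constructor <;> linarith
  refine ⟨hdd_bounds, fun i => ?_⟩
  have hX_row : 0.9 * σr * ‖toLp 2 (X i)‖ ≤ ‖toLp 2 ((X * diagonal dd * Yᵀ + E) i)‖ :=
    mul_norm_toLp_row_le hY (svd_mul_eq hY hEY) (by positivity)
      (fun k => (hdd_bounds k).1.trans (le_abs_self _)) i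
  have hM_row : ‖toLp 2 ((Xs * diagonal ds * Ysᵀ) i)‖ ≤ σ1 * √(μ * r / d1) :=
    (norm_toLp_row_svd_le hYs hσ1pos.le hds_upper i).trans <| by
      gcongr; rw [norm_toLp_eq_sqrt_sum_sq]; exact Real.sqrt_le_sqrt (hinc i)
  have hA_row : ‖toLp 2 ((X * diagonal dd * Yᵀ + E) i)‖ ≤ 1.8 * σ1 * √(μ * r / d1) := by
    rw [hA]
    exact norm_toLp_add_sub_le_of_sparse hd2 (by positivity) hσ1pos.le (by nlinarith) hM_row
      (hSstarτ i) (hSτ i) (hSstarRow i) (hSrow i)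
  rw [← norm_toLp_eq_sqrt_sum_sq]
  calc ‖toLp 2 (X i)‖ ≤ 2 * √(μ * r / d1) * (σ1 / σr) := by
        rw [mul_div_assoc', le_div_iff₀ hσr]; nlinarith
    _ ≤ 2 * √(μ * r / d1) * (σ1 / σr) ^ 2 := by
        gcongr; nlinarith [(one_le_div hσr).2 hσ1]

/-- Incoherence of the top-`r` SVD of `M* + S* − S` for sparse bounded `S, S*`
(robust PCA). With `M* = X* D* Y*ᵀ` a rank-`r` SVD, `X*` `μ`-incoherent, singular values
in `[σr, σ1]`, `S, S*` entrywise bounded by `τ = 2μrσ1/√(d1d2)` and `β`-sparse per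
row/column, and `X D Yᵀ` the top-`r` SVD of `M* + S* − S`: if
`‖S* − S‖ ≤ 4βμrσ1 ≤ 0.1σr` then `σ_r(D) ≥ 0.9σr`, `‖D‖ ≤ 1.1σ1`, and every row of `X`
satisfies `‖e_iᵀX‖ ≤ 2√(μr/d1)(σ1/σr)²`. -/
theorem stmt15 {d1 d2 r : ℕ} (hd1 : 0 < d1) (hd2 : 0 < d2) (hr : 0 < r)
    (β μ σ1 σr : ℝ) (hβ : 0 ≤ β) (hμ : 0 < μ) (hσr : 0 < σr) (hσ1 : σr ≤ σ1)
    -- rank-r SVD of M*, with incoherent left singular vectors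
    (Xs : Matrix (Fin d1) (Fin r) ℝ) (Ys : Matrix (Fin d2) (Fin r) ℝ) (ds : Fin r → ℝ)
    (hXs : Xsᵀ * Xs = 1) (hYs : Ysᵀ * Ys = 1)
    (hds : ∀ k, σr ≤ ds k ∧ ds k ≤ σ1)
    (hinc : ∀ i : Fin d1, (∑ k, (Xs i k) ^ 2) ≤ μ * r / d1)
    -- sparse bounded perturbations S, S*
    (S Sstar : Matrix (Fin d1) (Fin d2) ℝ)
    (hSτ : ∀ i j, |S i j| ≤ 2 * μ * r * σ1 / Real.sqrt (d1 * d2))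
    (hSstarτ : ∀ i j, |Sstar i j| ≤ 2 * μ * r * σ1 / Real.sqrt (d1 * d2))
    (hSrow : ∀ i : Fin d1,
      ((Finset.univ.filter fun j : Fin d2 => S i j ≠ 0).card : ℝ) ≤ β * d2)
    (hScol : ∀ j : Fin d2,
      ((Finset.univ.filter fun i : Fin d1 => S i j ≠ 0).card : ℝ) ≤ β * d1)
    (hSstarRow : ∀ i : Fin d1,
      ((Finset.univ.filter fun j : Fin d2 => Sstar i j ≠ 0).card : ℝ) ≤ β * d2)
    (hSstarCol : ∀ j : Fin d2,
      ((Finset.univ.filter fun i : Fin d1 => Sstar i j ≠ 0).card : ℝ) ≤ β * d1)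
    -- top-r SVD of M* + S* − S
    (X : Matrix (Fin d1) (Fin r) ℝ) (Y : Matrix (Fin d2) (Fin r) ℝ) (dd : Fin r → ℝ)
    (E : Matrix (Fin d1) (Fin d2) ℝ)
    (hX : Xᵀ * X = 1) (hY : Yᵀ * Y = 1) (hdd : ∀ k, 0 ≤ dd k)
    (hdecomp : Xs * Matrix.diagonal ds * Ysᵀ + Sstar - S = X * Matrix.diagonal dd * Yᵀ + E)
    (hXE : Xᵀ * E = 0) (hEY : E * Y = 0)
    (hEtail : ∀ k, specNorm E ≤ dd k)
    -- the antecedent of the implication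
    (hSdiff : specNorm (Sstar - S) ≤ 4 * β * μ * r * σ1)
    (hsmall : 4 * β * μ * r * σ1 ≤ 0.1 * σr) :
    (∀ k, 0.9 * σr ≤ dd k ∧ dd k ≤ 1.1 * σ1) ∧
      (∀ i : Fin d1,
        Real.sqrt (∑ k, (X i k) ^ 2) ≤
          2 * Real.sqrt (μ * r / d1) * (σ1 / σr) ^ 2) :=
  stmt15_general hd2 β μ σ1 σr hμ hσr hσ1 Xs Ys ds hXs hYs hds hinc S Sstar hSτ hSstarτ hSrow
    hSstarRow X Y dd E hX hY hdd hdecomp hXE hEY hEtail hSdiff hsmall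
end
end
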